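/- arXiv:1909.10845 — 12 statements merged into one kernel-verified Lean document; each statement's English description precedes it below -/
import Mathlib

section
/- Any tolerance block of a tolerance relation on a lattice is a convex sublattice. -/
def IsTolerance {L : Type*} [Lattice L] (T : L → L → Prop) : Prop :=
  (∀ x, T x x) ∧ (∀ x y, T x y → T y x) ∧
  (∀ a b c d, T a b → T c d → T (a ⊔ c) (b ⊔ d) ∧ T (a ⊓ c) (b ⊓ d))

def IsBlock {L : Type*} [Lattice L] (T : L → L → Prop) (X : Set L) : Prop :=
  (∀ x ∈ X, ∀ y ∈ X, T x y) ∧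
  ∀ Y : Set L, X ⊆ Y → (∀ x ∈ Y, ∀ y ∈ Y, T x y) → Y = X

def IsTwoUniform {L : Type*} [Lattice L] (T : L → L → Prop) : Prop :=
  IsTolerance T ∧ ∀ X : Set L, IsBlock T X → ∃ a b : L, a ≠ b ∧ X = {a, b}

def NoInfiniteChains (L : Type*) [Lattice L] : Prop :=
  ∀ C : Set L, IsChain (· ≤ ·) C → C.Finite

def Comp {L : Type*} (T S : L → L → Prop) : L → L → Prop :=
  fun x z => ∃ y, T x y ∧ S y z

def IsLowerNbr {L : Type*} [Lattice L] (R : L → L → Prop) (v u : L) : Prop :=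
  v ⋖ u ∧ IsBlock R {v, u}

def IsUpperNbr {L : Type*} [Lattice L] (R : L → L → Prop) (w u : L) : Prop :=
  u ⋖ w ∧ IsBlock R {u, w}

def IsRTop {L : Type*} [Lattice L] (R : L → L → Prop) (u : L) : Prop :=
  ∃ v, IsLowerNbr R v u

def IsRBottom {L : Type*} [Lattice L] (R : L → L → Prop) (u : L) : Prop :=
  ∃ w, IsUpperNbr R w u

def Amicable {L : Type*} [Lattice L] (T S : L → L → Prop) : Prop :=
  (∀ u v, IsRTop T u → IsRTop S u → u ⋖ v → (T u v ∨ S u v) →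
    IsRTop T v ∧ IsRTop S v) ∧
  (∀ u v, IsRBottom T u → IsRBottom S u → v ⋖ u → (T v u ∨ S v u) →
    IsRBottom T v ∧ IsRBottom S v)

def IsCongruence {L : Type*} [Lattice L] (T : L → L → Prop) : Prop :=
  Equivalence T ∧
  ∀ a b c d, T a b → T c d → T (a ⊔ c) (b ⊔ d) ∧ T (a ⊓ c) (b ⊓ d)

def IsTwoUniformCongruence {L : Type*} [Lattice L] (T : L → L → Prop) : Prop :=
  IsCongruence T ∧ ∀ x : L, ∃ a b : L, a ≠ b ∧ (∀ y, T x y ↔ y = a ∨ y = b)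

theorem stmt0 {L : Type*} [Lattice L] (T : L → L → Prop) (hT : IsTolerance T)
    (X : Set L) (hX : IsBlock T X) :
    (∀ a ∈ X, ∀ b ∈ X, a ⊔ b ∈ X ∧ a ⊓ b ∈ X) ∧
    (∀ a ∈ X, ∀ b ∈ X, ∀ c : L, a ≤ c → c ≤ b → c ∈ X) := by
  obtain ⟨hrefl, hsymm, hcompat⟩ := hT
  obtain ⟨hXT, hXmax⟩ := hX
  -- key: if T c x for all x ∈ X, then c ∈ X
  have key : ∀ c : L, (∀ x ∈ X, T c x) → c ∈ X := by
    intro c hc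
    have h := hXmax (insert c X) (Set.subset_insert c X) ?_
    · rw [← h]; exact Set.mem_insert c X
    · intro x hx y hy
      rcases hx with rfl | hx <;> rcases hy with rfl | hy
      · exact hrefl _
      · exact hc y hy
      · exact hsymm _ _ (hc x hx)
      · exact hXT x hx y hy
  constructor
  · intro a ha b hb
    constructor
    · exact key _ (fun x hx => by
        have := (hcompat a x b x (hXT a ha x hx) (hXT b hb x hx)).1
        simpa using this)
    · exact key _ (fun x hx => by
        have := (hcompat a x b x (hXT a ha x hx) (hXT b hb x hx)).2
        simpa using this)
  · intro a ha b hb c hac hcb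
    apply key
    intro x hx
    have h1 : T c (x ⊓ c) := by
      have := (hcompat b x c c (hXT b hb x hx) (hrefl c)).2
      simpa [inf_eq_right.mpr hcb] using this
    have h2 : T c (x ⊔ c) := by
      have := (hcompat a x c c (hXT a ha x hx) (hrefl c)).1
      simpa [sup_eq_right.mpr hac] using this
    have h3 : T (c ⊓ x) x := by
      have := (hcompat c (x ⊔ c) x x h2 (hrefl x)).2
      simpa [inf_comm] using this
    have h4 : T c (c ⊓ x) := by simpa [inf_comm] using h1
    have := (hcompat c (c ⊓ x) (c ⊓ x) x h4 h3).1
    simpa [sup_inf_self] using this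
end

section
/- Let R be a 2-uniform tolerance on a lattice L without infinite chains. If x and y are both lower R-neighbours of z (i.e., x ≺ z, y ≺ z, and {x,z} and {y,z} are R-blocks), then x = y. -/
theorem stmt2 {L : Type*} [Lattice L] (hL : NoInfiniteChains L)
    (R : L → L → Prop) (hR : IsTwoUniform R) (x y z : L)
    (hx : IsLowerNbr R x z) (hy : IsLowerNbr R y z) : x = y := by
  obtain ⟨⟨hrefl, hsymm, hcomp⟩, _⟩ := hR
  obtain ⟨hxz, hbx⟩ := hx
  obtain ⟨hyz, hby⟩ := hy
  have Txz : R x z := hbx.1 x (by simp) z (by simp)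
  have Tyz : R y z := hby.1 y (by simp) z (by simp)
  have step : ∀ a b : L, a ⋖ z → IsBlock R {a, z} → R b z → a ⊓ b = a := by
    intro a b hab hblk Tbz
    have Taz : R a z := hblk.1 a (by simp) z (by simp)
    have Tma : R (a ⊓ b) a := by
      have := (hcomp a a b z (hrefl a) Tbz).2
      rwa [inf_of_le_left hab.le] at this
    have Tmz : R (a ⊓ b) z := by
      have := (hcomp a z b z Taz Tbz).2
      rwa [inf_idem] at this
    have hmax := hblk.2 (insert (a ⊓ b) {a, z}) (Set.subset_insert _ _) ?_
    · have hmem : a ⊓ b ∈ ({a, z} : Set L) := hmax ▸ Set.mem_insert _ _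
      rcases hmem with h | h
      · exact h
      · exact absurd (h ▸ inf_le_left : z ≤ a) hab.lt.not_ge
    · intro p hp q hq
      simp only [Set.mem_insert_iff, Set.mem_singleton_iff] at hp hq
      rcases hp with rfl | rfl | rfl <;> rcases hq with rfl | rfl | rfl <;>
        first
        | exact hrefl _
        | exact Tma
        | exact Tmz
        | exact Taz
        | exact hsymm _ _ Tma
        | exact hsymm _ _ Tmz
        | exact hsymm _ _ Taz
  have h1 := step x y hxz hbx Tyz
  have h2 := step y x hyz hby Txz
  exact le_antisymm (inf_eq_left.mp h1) (inf_eq_left.mp h2)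
end

section
/- Let R be a 2-uniform tolerance on a lattice L without infinite chains. If (x,y) ∈ R, then x = y, or x ≺ y, or y ≺ x. -/
theorem stmt3 {L : Type*} [Lattice L] (hL : NoInfiniteChains L)
    (R : L → L → Prop) (hR : IsTwoUniform R) (x y : L) (hxy : R x y) :
    x = y ∨ x ⋖ y ∨ y ⋖ x := by
  obtain ⟨⟨hrefl, hsymm, hcomp⟩, huni⟩ := hR
  by_cases hxyeq : x = y
  · exact Or.inl hxyeq
  -- extend {x, y} to a block via Zorn
  set S : Set (Set L) := {Y | ({x, y} : Set L) ⊆ Y ∧ ∀ a ∈ Y, ∀ b ∈ Y, R a b} with hS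
  have hxyS : ({x, y} : Set L) ∈ S := by
    constructor
    · exact subset_rfl
    · intro a ha b hb
      simp only [Set.mem_insert_iff, Set.mem_singleton_iff] at ha hb
      rcases ha with ha | ha <;> rcases hb with hb | hb <;> rw [ha, hb] <;>
        first | exact hrefl _ | exact hxy | exact hsymm _ _ hxy
  obtain ⟨M, hsub, hMS, hmax⟩ := zorn_subset_nonempty S (fun c hcS hc hne => by
    refine ⟨⋃₀ c, ⟨?_, ?_⟩, fun s hs => Set.subset_sUnion_of_mem hs⟩
    · obtain ⟨s, hs⟩ := hne
      exact (hcS hs).1.trans (Set.subset_sUnion_of_mem hs)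
    · rintro a ⟨s, hs, has⟩ b ⟨t, ht, hbt⟩
      rcases hc.total hs ht with h | h
      · exact (hcS ht).2 a (h has) b hbt
      · exact (hcS hs).2 a has b (h hbt)) _ hxyS
  have hblock : IsBlock R M := by
    refine ⟨hMS.2, fun Y hMY hY => subset_antisymm (hmax ⟨hsub.trans hMY, hY⟩ hMY) hMY⟩
  -- M is a 2-element block containing x and y, hence M = {x, y}
  obtain ⟨a, b, hab, hMab⟩ := huni M hblock
  have hxM : x ∈ M := hsub (by simp)
  have hyM : y ∈ M := hsub (by simp)
  have hMxy : M = {x, y} := by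
    rw [hMab] at hxM hyM ⊢
    rcases hxM with rfl | rfl <;> rcases hyM with h | h <;>
      first
      | exact absurd h hxyeq
      | exact absurd h.symm hxyeq
      | (subst h; rfl)
      | (subst h; exact Set.pair_comm _ _)
  -- key: anything pairwise related to x and y lies in {x, y}
  have hkey : ∀ z, R z x → R z y → z = x ∨ z = y := by
    intro z hzx hzy
    have : insert z M = M := by
      apply hblock.2
      · exact Set.subset_insert _ _
      · intro a ha b hb
        rcases Set.mem_insert_iff.mp ha with ha' | haM <;>
          rcases Set.mem_insert_iff.mp hb with hb' | hbM
        · rw [ha', hb']; exact hrefl _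
        · rw [ha']
          rw [hMxy] at hbM
          simp only [Set.mem_insert_iff, Set.mem_singleton_iff] at hbM
          rcases hbM with hb' | hb' <;> rw [hb']
          · exact hzx
          · exact hzy
        · rw [hb']
          rw [hMxy] at haM
          simp only [Set.mem_insert_iff, Set.mem_singleton_iff] at haM
          rcases haM with ha' | ha' <;> rw [ha']
          · exact hsymm _ _ hzx
          · exact hsymm _ _ hzy
        · exact hblock.1 a haM b hbM
    have hzM : z ∈ M := this ▸ Set.mem_insert z M
    rw [hMxy] at hzM
    exact hzM
  -- x ⊓ y is related to both x and y
  have hmeet : R (x ⊓ y) x := by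
    have := (hcomp x x y x (hrefl x) (hsymm _ _ hxy)).2
    simpa using this
  have hmeet' : R (x ⊓ y) y := by
    have := (hcomp x y y y hxy (hrefl y)).2
    simpa using this
  have hcompar : x ≤ y ∨ y ≤ x := by
    rcases hkey (x ⊓ y) hmeet hmeet' with h | h
    · exact Or.inl (inf_eq_left.mp h)
    · exact Or.inr (inf_eq_right.mp h)
  rcases hcompar with h | h
  · refine Or.inr (Or.inl ⟨lt_of_le_of_ne h hxyeq, fun z hxz hzy => ?_⟩)
    have h1 : R (x ⊓ z) (y ⊓ z) := (hcomp x y z z hxy (hrefl z)).2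
    rw [inf_eq_left.mpr hxz.le, inf_eq_right.mpr hzy.le] at h1
    have h2 : R (x ⊔ z) (y ⊔ z) := (hcomp x y z z hxy (hrefl z)).1
    rw [sup_eq_right.mpr hxz.le, sup_eq_left.mpr hzy.le] at h2
    rcases hkey z (hsymm _ _ h1) h2 with rfl | rfl
    · exact lt_irrefl _ hxz
    · exact lt_irrefl _ hzy
  · have hyx : R y x := hsymm _ _ hxy
    refine Or.inr (Or.inr ⟨lt_of_le_of_ne h (Ne.symm hxyeq), fun z hyz hzx => ?_⟩)
    have h1 : R (y ⊓ z) (x ⊓ z) := (hcomp y x z z hyx (hrefl z)).2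
    rw [inf_eq_left.mpr hyz.le, inf_eq_right.mpr hzx.le] at h1
    have h2 : R (y ⊔ z) (x ⊔ z) := (hcomp y x z z hyx (hrefl z)).1
    rw [sup_eq_right.mpr hyz.le, sup_eq_left.mpr hzx.le] at h2
    rcases hkey z h2 (hsymm _ _ h1) with rfl | rfl
    · exact lt_irrefl _ hzx
    · exact lt_irrefl _ hyz
end

section
/- Let T and S be 2-uniform tolerances on a lattice L without infinite chains, and let a, b, u ∈ L with a ≠ b. If a is the lower T-neighbour of u and b is the lower S-neighbour of u, then a∧b is the lower S-neighbour of a and the lower T-neighbour of b. -/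
lemma exists_block {L : Type*} [Lattice L] {T : L → L → Prop} (hT : IsTolerance T)
    {x y : L} (h : T x y) : ∃ X : Set L, IsBlock T X ∧ x ∈ X ∧ y ∈ X := by
  obtain ⟨m, hxm, hm⟩ := zorn_subset_nonempty
    {A : Set L | ∀ p ∈ A, ∀ q ∈ A, T p q}
    (fun c hc hchain _ => by
      refine ⟨⋃₀ c, ?_, fun s hs => Set.subset_sUnion_of_mem hs⟩
      rintro p ⟨s, hs, hps⟩ q ⟨t, ht, hqt⟩
      rcases hchain.total hs ht with hst | hts
      · exact hc ht p (hst hps) q hqt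
      · exact hc hs p hps q (hts hqt))
    {x, y}
    (by
      intro p hp q hq
      simp only [Set.mem_insert_iff, Set.mem_singleton_iff] at hp hq
      rcases hp with rfl | rfl <;> rcases hq with rfl | rfl
      · exact hT.1 _
      · exact h
      · exact hT.2.1 _ _ h
      · exact hT.1 _)
  refine ⟨m, ⟨hm.1, fun Y hmY hY => ?_⟩, hxm (by simp), hxm (by simp)⟩
  exact le_antisymm (hm.2 hY hmY) hmY

lemma two_uniform_lower_nbr {L : Type*} [Lattice L] {T : L → L → Prop}
    (hT : IsTwoUniform T) {m a : L} (hne : m ≠ a) (hle : m ≤ a) (hTma : T m a) :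
    IsLowerNbr T m a := by
  obtain ⟨X, hX, hmX, haX⟩ := exists_block hT.1 hTma
  obtain ⟨p, q, hpq, rfl⟩ := hT.2 X hX
  have hXma : ({p, q} : Set L) = {m, a} := by
    simp only [Set.mem_insert_iff, Set.mem_singleton_iff] at hmX haX
    rcases hmX with rfl | rfl <;> rcases haX with rfl | rfl
    · exact absurd rfl hne
    · rfl
    · exact Set.pair_comm _ _
    · exact absurd rfl hne
  rw [hXma] at hX
  have hTc : ∀ c : L, m ≤ c → c ≤ a → ∀ z ∈ ({m, a} : Set L), T c z := by
    intro c hmc hca z hz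
    have h1 : T m z := hX.1 m (by simp) z hz
    have h2 : T a z := hX.1 a (by simp) z hz
    have h3 := (hT.1.2.2 m z c c h1 (hT.1.1 c)).1
    have h4 := (hT.1.2.2 (m ⊔ c) (z ⊔ c) a z h3 h2).2
    rwa [sup_eq_right.mpr hmc, inf_eq_left.mpr hca,
      inf_eq_right.mpr le_sup_left] at h4
  constructor
  · refine ⟨hle.lt_of_ne hne, fun c hc1 hc2 => ?_⟩
    have hcmem : c ∈ ({m, a} : Set L) := by
      have hY : ∀ x ∈ insert c ({m, a} : Set L), ∀ y ∈ insert c ({m, a} : Set L), T x y := by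
        intro x hx y hy
        simp only [Set.mem_insert_iff] at hx hy
        rcases hx with rfl | hx <;> rcases hy with rfl | hy
        · exact hT.1.1 _
        · exact hTc _ hc1.le hc2.le _ hy
        · exact hT.1.2.1 _ _ (hTc _ hc1.le hc2.le _ hx)
        · exact hX.1 x hx y hy
      have := hX.2 _ (Set.subset_insert _ _) hY
      rw [← this]; exact Set.mem_insert _ _
    rcases hcmem with rfl | rfl
    · exact hc1.false
    · exact hc2.false
  · exact hX

set_option linter.unusedVariables false in
theorem stmt4 {L : Type*} [Lattice L] (hL : NoInfiniteChains L)
    (T S : L → L → Prop) (hT : IsTwoUniform T) (hS : IsTwoUniform S)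
    (a b u : L) (hab : a ≠ b)
    (ha : IsLowerNbr T a u) (hb : IsLowerNbr S b u) :
    IsLowerNbr S (a ⊓ b) a ∧ IsLowerNbr T (a ⊓ b) b := by
  have hau : a ≤ u := ha.1.le
  have hbu : b ≤ u := hb.1.le
  constructor
  · have hSbu : S b u := hb.2.1 b (by simp) u (by simp)
    have hSa : S (a ⊓ b) a := by
      have := (hS.1.2.2 b u a a hSbu (hS.1.1 a)).2
      rwa [inf_comm b a, inf_eq_right.mpr hau] at this
    have hne1 : a ⊓ b ≠ a := by
      intro h
      have hab' : a ≤ b := inf_eq_left.mp h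
      exact ha.1.2 (hab'.lt_of_ne hab) hb.1.lt
    exact two_uniform_lower_nbr hS hne1 inf_le_left hSa
  · have hTau : T a u := ha.2.1 a (by simp) u (by simp)
    have hTb : T (a ⊓ b) b := by
      have := (hT.1.2.2 a u b b hTau (hT.1.1 b)).2
      rwa [inf_eq_right.mpr hbu] at this
    have hne2 : a ⊓ b ≠ b := by
      intro h
      have hba : b ≤ a := inf_eq_right.mp h
      exact hb.1.2 (hba.lt_of_ne (Ne.symm hab)) ha.1.lt
    exact two_uniform_lower_nbr hT hne2 inf_le_right hTb
end

section
/- Let R be a 2-uniform tolerance on a lattice L without infinite chains. Then every element u of L is an R-top or an R-bottom: there exists v ≺ u such that {v,u} is an R-block, or there exists w with u ≺ w such that {u,w} is an R-block. -/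
lemma exists_block_mem {L : Type*} [Lattice L] (R : L → L → Prop)
    (hrefl : ∀ x, R x x) (u : L) : ∃ X, IsBlock R X ∧ u ∈ X := by
  obtain ⟨m, hsub, hmax⟩ := zorn_subset_nonempty
    {X : Set L | ∀ x ∈ X, ∀ y ∈ X, R x y}
    (fun c hc hchain _ => by
      refine ⟨⋃₀ c, ?_, fun s hs => Set.subset_sUnion_of_mem hs⟩
      rintro x ⟨s, hs, hxs⟩ y ⟨t, ht, hyt⟩
      rcases hchain.total hs ht with h | h
      · exact hc ht x (h hxs) y hyt
      · exact hc hs x hxs y (h hyt))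
    {u} (by rintro x rfl y rfl; exact hrefl _)
  refine ⟨m, ⟨hmax.1, fun Y hY hYp => le_antisymm (hmax.2 hYp hY) hY⟩, hsub rfl⟩

lemma block_comparable {L : Type*} [Lattice L] {R : L → L → Prop}
    (hT : IsTolerance R) {u c : L} (hB : IsBlock R {u, c}) : c ≤ u ∨ u ≤ c := by
  obtain ⟨hrefl, hsym, hcomp⟩ := hT
  have hp := hB.1
  have huc : R u c := hp u (Or.inl rfl) c (Or.inr rfl)
  have h1 : R u (u ⊔ c) := by
    have := (hcomp u u u c (hrefl u) huc).1
    simpa using this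
  have h2 : R c (u ⊔ c) := by
    have := (hcomp c u c c (hsym _ _ huc) (hrefl c)).1
    simpa [sup_comm] using this
  have hY := hB.2 (insert (u ⊔ c) {u, c}) (Set.subset_insert _ _) ?_
  · have : u ⊔ c ∈ ({u, c} : Set L) := hY ▸ Set.mem_insert _ _
    rcases this with h | h
    · left; exact sup_eq_left.mp h
    · right; exact sup_eq_right.mp h
  · rintro x (rfl | rfl | rfl) y (rfl | rfl | rfl)
    · exact hrefl _
    · exact hsym _ _ h1
    · exact hsym _ _ h2
    · exact h1
    · exact hrefl _
    · exact huc
    · exact h2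
    · exact hsym _ _ huc
    · exact hrefl _

lemma block_covby {L : Type*} [Lattice L] {R : L → L → Prop}
    (hT : IsTolerance R) {a b : L} (hab : a < b) (hB : IsBlock R {a, b}) : a ⋖ b := by
  obtain ⟨hrefl, hsym, hcomp⟩ := hT
  refine ⟨hab, fun z hz1 hz2 => ?_⟩
  have hab' : R a b := hB.1 a (Or.inl rfl) b (Or.inr rfl)
  have h1 : R z b := by
    have := (hcomp a b z z hab' (hrefl z)).1
    simpa [sup_eq_right.mpr hz1.le, sup_eq_left.mpr hz2.le] using this
  have h2 : R a z := by
    have := (hcomp a b z z hab' (hrefl z)).2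
    simpa [inf_eq_left.mpr hz1.le, inf_eq_right.mpr hz2.le] using this
  have hY := hB.2 (insert z {a, b}) (Set.subset_insert _ _) ?_
  · have : z ∈ ({a, b} : Set L) := hY ▸ Set.mem_insert _ _
    rcases this with rfl | rfl
    · exact lt_irrefl _ hz1
    · exact lt_irrefl _ hz2
  · rintro x (rfl | rfl | rfl) y (rfl | rfl | rfl)
    · exact hrefl _
    · exact hsym _ _ h2
    · exact h1
    · exact h2
    · exact hrefl _
    · exact hab'
    · exact hsym _ _ h1
    · exact hsym _ _ hab'
    · exact hrefl _

theorem stmt5 {L : Type*} [Lattice L] (hL : NoInfiniteChains L)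
    (R : L → L → Prop) (hR : IsTwoUniform R) (u : L) :
    IsRTop R u ∨ IsRBottom R u := by
  obtain ⟨hT, h2u⟩ := hR
  obtain ⟨X, hBX, huX⟩ := exists_block_mem R hT.1 u
  obtain ⟨a, b, hab, rfl⟩ := h2u X hBX
  -- u is a or b; let c be the other one
  have key : ∀ c : L, c ≠ u → IsBlock R {u, c} → IsRTop R u ∨ IsRBottom R u := by
    intro c hcu hB
    rcases block_comparable hT hB with h | h
    · left
      have hlt : c < u := lt_of_le_of_ne h hcu
      have hB' : IsBlock R {c, u} := by rwa [Set.pair_comm c u]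
      exact ⟨c, block_covby hT hlt hB', hB'⟩
    · right
      have hlt : u < c := lt_of_le_of_ne h (Ne.symm hcu)
      exact ⟨c, block_covby hT hlt hB, hB⟩
  rcases huX with rfl | rfl
  · exact key b hab.symm hBX
  · have : ({a, u} : Set L) = {u, a} := Set.pair_comm a u
    exact key a hab (this ▸ hBX)
end

section
/- Let T and S be permuting 2-uniform tolerances on a lattice L without infinite chains. If u is an adherent (T,S)-top (i.e., u has a common lower T-neighbour and lower S-neighbour), u ≺ v, and (u,v) ∈ T ∪ S, then v is an adherent (T,S)-top. -/
lemma pair_is_block {L : Type*} [Lattice L] {T : L → L → Prop}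
    (hT : IsTwoUniform T) {p q : L} (hpq : p ≠ q) (h : T p q) :
    IsBlock T ({p, q} : Set L) := by
  obtain ⟨⟨hrefl, hsym, _⟩, h2⟩ := hT
  have hbase : ({p, q} : Set L) ∈ {Y : Set L | ∀ x ∈ Y, ∀ y ∈ Y, T x y} := by
    intro x hx y hy
    simp only [Set.mem_insert_iff, Set.mem_singleton_iff] at hx hy
    rcases hx with rfl | rfl <;> rcases hy with rfl | rfl
    · exact hrefl _
    · exact h
    · exact hsym _ _ h
    · exact hrefl _
  obtain ⟨M, hsub, hM⟩ := zorn_subset_nonempty {Y : Set L | ∀ x ∈ Y, ∀ y ∈ Y, T x y}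
    (fun c hc hchain hne => by
      refine ⟨⋃₀ c, ?_, fun s hs => Set.subset_sUnion_of_mem hs⟩
      rintro x ⟨sx, hsx, hxs⟩ y ⟨sy, hsy, hys⟩
      rcases hchain.total hsx hsy with hss | hss
      · exact hc hsy x (hss hxs) y hys
      · exact hc hsx x hxs y (hss hys)) _ hbase
  have hMblock : IsBlock T M := by
    refine ⟨hM.prop, fun Y hMY hY => hM.eq_of_subset hY hMY |>.symm ▸ rfl⟩
  obtain ⟨c, d, hcd, hMcd⟩ := h2 M hMblock
  have hp : p ∈ M := hsub (Set.mem_insert _ _)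
  have hq : q ∈ M := hsub (Set.mem_insert_of_mem _ rfl)
  have : M = ({p, q} : Set L) := by
    rw [hMcd] at hp hq ⊢
    simp only [Set.mem_insert_iff, Set.mem_singleton_iff] at hp hq
    rcases hp with rfl | rfl <;> rcases hq with rfl | rfl
    · exact absurd rfl hpq
    · rfl
    · exact Set.pair_comm _ _
    · exact absurd rfl hpq
  exact this ▸ hMblock

/-- Key step: with a common lower block and `T u v`, permutability forces `S u v`. -/
lemma key_step {L : Type*} [Lattice L] {T S : L → L → Prop}
    (hT : IsTwoUniform T) (hS : IsTwoUniform S)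
    {u v a : L} (hau : a ⋖ u) (hTb : IsBlock T ({a, u} : Set L))
    (huv : u ⋖ v) (hTuv : T u v)
    (hcomp : ∃ y, T a y ∧ S y v) : S u v := by
  obtain ⟨⟨hTrefl, hTsym, hTcompat⟩, hT2⟩ := hT
  obtain ⟨⟨hSrefl, hSsym, hScompat⟩, _⟩ := hS
  have hTau : T a u := hTb.1 a (Set.mem_insert _ _) u (Set.mem_insert_of_mem _ rfl)
  have hav : a < v := hau.lt.trans huv.lt
  obtain ⟨y, hTay, hSyv⟩ := hcomp
  set y' : L := (a ⊔ y) ⊓ v with hy'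
  have hTay' : T a y' := by
    have h1 : T a (a ⊔ y) := by
      have := (hTcompat a a a y (hTrefl a) hTay).1
      simpa using this
    have := (hTcompat a (a ⊔ y) v v h1 (hTrefl v)).2
    simpa [inf_eq_left.mpr hav.le] using this
  have hSy'v : S y' v := by
    have h1 : S (a ⊔ y) v := by
      have := (hScompat a a y v (hSrefl a) hSyv).1
      simpa [sup_eq_right.mpr hav.le] using this
    have := (hScompat (a ⊔ y) v v v h1 (hSrefl v)).2
    simpa using this
  have hay' : a ≤ y' := le_inf le_sup_left hav.le
  have hy'v : y' ≤ v := inf_le_right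
  -- derive a contradiction from T a v
  have hTav_contra : T a v → False := by
    intro hTav
    have hY : ∀ x ∈ ({a, u, v} : Set L), ∀ z ∈ ({a, u, v} : Set L), T x z := by
      intro x hx z hz
      simp only [Set.mem_insert_iff, Set.mem_singleton_iff] at hx hz
      rcases hx with rfl | rfl | rfl <;> rcases hz with rfl | rfl | rfl
      · exact hTrefl _
      · exact hTau
      · exact hTav
      · exact hTsym _ _ hTau
      · exact hTrefl _
      · exact hTuv
      · exact hTsym _ _ hTav
      · exact hTsym _ _ hTuv
      · exact hTrefl _
    have hsub : ({a, u} : Set L) ⊆ ({a, u, v} : Set L) := by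
      intro x hx
      simp only [Set.mem_insert_iff, Set.mem_singleton_iff] at hx ⊢
      tauto
    have := hTb.2 _ hsub hY
    have hv : v ∈ ({a, u} : Set L) := by
      rw [← this]; simp
    simp only [Set.mem_insert_iff, Set.mem_singleton_iff] at hv
    rcases hv with rfl | rfl
    · exact absurd hav (lt_irrefl _)
    · exact absurd huv.lt (lt_irrefl _)
  by_cases hyu : y' ≤ u
  · rcases eq_or_lt_of_le hay' with heq | hlt
    · -- y' = a : S a v, push upward to S u v
      have hSav : S a v := heq ▸ hSy'v
      have := (hScompat a v u u hSav (hSrefl u)).1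
      simpa [sup_eq_right.mpr hau.lt.le, sup_eq_left.mpr huv.lt.le] using this
    · -- a < y' ≤ u forces y' = u
      have : y' = u := by
        rcases lt_or_eq_of_le hyu with hlt2 | heq2
        · exact absurd hlt2 (hau.2 hlt)
        · exact heq2
      exact this ▸ hSy'v
  · -- u < u ⊔ y' ≤ v forces u ⊔ y' = v, hence T a v, contradiction
    have hlt : u < u ⊔ y' := by
      rcases lt_or_eq_of_le (le_sup_left : u ≤ u ⊔ y') with h | h
      · exact h
      · exact absurd (h ▸ le_sup_right : y' ≤ u) hyu
    have hle : u ⊔ y' ≤ v := sup_le huv.lt.le hy'v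
    have hv : u ⊔ y' = v := by
      rcases lt_or_eq_of_le hle with h | h
      · exact absurd h (huv.2 hlt)
      · exact h
    have : T a (u ⊔ y') := by
      have := (hTcompat a u a y' hTau hTay').1
      simpa using this
    exact (hTav_contra (hv ▸ this)).elim

theorem stmt7 {L : Type*} [Lattice L] (hL : NoInfiniteChains L)
    (T S : L → L → Prop) (hT : IsTwoUniform T) (hS : IsTwoUniform S)
    (hperm : ∀ x z, Comp T S x z ↔ Comp S T x z)
    (u v a : L) (ha : IsLowerNbr T a u) (ha2 : IsLowerNbr S a u)
    (huv : u ⋖ v) (hTS : T u v ∨ S u v) :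
    ∃ c : L, IsLowerNbr T c v ∧ IsLowerNbr S c v := by
  obtain ⟨hau, hTb⟩ := ha
  obtain ⟨_, hSb⟩ := ha2
  have hTau : T a u := hTb.1 a (Set.mem_insert _ _) u (Set.mem_insert_of_mem _ rfl)
  have hSau : S a u := hSb.1 a (Set.mem_insert _ _) u (Set.mem_insert_of_mem _ rfl)
  have huv_ne : u ≠ v := huv.lt.ne
  rcases hTS with hTuv | hSuv
  · have hSuv : S u v := key_step hT hS hau hTb huv hTuv
      ((hperm a v).mpr ⟨u, hSau, hTuv⟩)
    exact ⟨u, ⟨huv, pair_is_block hT huv_ne hTuv⟩, ⟨huv, pair_is_block hS huv_ne hSuv⟩⟩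
  · have hTuv : T u v := key_step hS hT hau hSb huv hSuv
      ((hperm a v).mp ⟨u, hTau, hSuv⟩)
    exact ⟨u, ⟨huv, pair_is_block hT huv_ne hTuv⟩, ⟨huv, pair_is_block hS huv_ne hSuv⟩⟩
end

section
/- Let T and S be permuting 2-uniform tolerances on a lattice L without infinite chains. If u is a split (T,S)-bottom (i.e., u has distinct upper T-neighbour and upper S-neighbour), v ≺ u, and (v,u) ∈ T ∪ S, then v is a split (T,S)-bottom. -/
section helpers
variable {L : Type*} [Lattice L] {T : L → L → Prop}

/-- Every pair of distinct related elements of a 2-uniform tolerance forms a block. -/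
lemma blk (hT : IsTwoUniform T) {x y : L} (hxy : T x y) (hne : x ≠ y) :
    IsBlock T ({x, y} : Set L) := by
  obtain ⟨hrefl, hsymm, _⟩ := hT.1
  set P : Set (Set L) := {Z | ∀ a ∈ Z, ∀ b ∈ Z, T a b} with hP
  have hseed : ({x, y} : Set L) ∈ P := by
    intro p hp q hq
    simp only [Set.mem_insert_iff, Set.mem_singleton_iff] at hp hq
    rcases hp with rfl | rfl <;> rcases hq with rfl | rfl
    · exact hrefl _
    · exact hxy
    · exact hsymm _ _ hxy
    · exact hrefl _
  have hchain : ∀ c ⊆ P, IsChain (· ⊆ ·) c → c.Nonempty →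
      ∃ ub ∈ P, ∀ s ∈ c, s ⊆ ub := by
    intro c hc hchain _
    refine ⟨⋃₀ c, ?_, fun s hs => Set.subset_sUnion_of_mem hs⟩
    rintro p ⟨Z1, hZ1, hp⟩ q ⟨Z2, hZ2, hq⟩
    rcases hchain.total hZ1 hZ2 with h | h
    · exact hc hZ2 p (h hp) q hq
    · exact hc hZ1 p hp q (h hq)
  obtain ⟨M, hsub, hM⟩ := zorn_subset_nonempty P hchain {x, y} hseed
  have hblockM : IsBlock T M := by
    refine ⟨hM.1, fun Y hMY hYpair => ?_⟩
    exact Set.Subset.antisymm (hM.2 hYpair hMY) hMY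
  obtain ⟨p, q, hpq, hMeq⟩ := hT.2 M hblockM
  have hx : x ∈ ({p, q} : Set L) := hMeq ▸ hsub (Set.mem_insert x _)
  have hy : y ∈ ({p, q} : Set L) := hMeq ▸ hsub (Set.mem_insert_of_mem x rfl)
  have : M = ({x, y} : Set L) := by
    rw [hMeq]
    rcases hx with rfl | hx <;> rcases hy with rfl | hy
    · exact absurd rfl hne
    · rcases hy with rfl; rfl
    · rcases hx with rfl; exact Set.pair_comm y x
    · rcases hx with rfl; rcases hy with rfl; exact absurd rfl hne
  rwa [this] at hblockM

/-- The two elements of a 2-element block are comparable. -/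
lemma blk_comparable (hT : IsTolerance T) {x y : L} (hB : IsBlock T ({x, y} : Set L)) :
    x ≤ y ∨ y ≤ x := by
  obtain ⟨hrefl, hsymm, hcomp⟩ := hT
  have hx : x ∈ ({x, y} : Set L) := Set.mem_insert x _
  have hy : y ∈ ({x, y} : Set L) := Set.mem_insert_of_mem x rfl
  have hxy : T x y := hB.1 x hx y hy
  have h1 : T x (x ⊔ y) := by
    have := (hcomp x y x x hxy (hrefl x)).1
    simpa [sup_comm] using this
  have h2 : T y (x ⊔ y) := by
    have := (hcomp y x y y (hsymm _ _ hxy) (hrefl y)).1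
    simpa using this
  have hYeq := hB.2 (insert (x ⊔ y) {x, y}) (Set.subset_insert _ _) ?_
  · have : x ⊔ y ∈ ({x, y} : Set L) := hYeq ▸ Set.mem_insert _ _
    rcases this with h | h
    · right; exact le_of_sup_eq (sup_comm x y ▸ h)
    · rcases h with h; left; exact le_of_sup_eq h
  · intro p hp q hq
    rcases hp with rfl | rfl | hp
    · rcases hq with rfl | rfl | hq
      · exact hrefl _
      · exact hsymm _ _ h1
      · rcases hq with rfl; exact hsymm _ _ h2
    · rcases hq with rfl | rfl | hq
      · exact h1
      · exact hrefl _
      · rcases hq with rfl; exact hxy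
    · rcases hp with rfl
      rcases hq with rfl | rfl | hq
      · exact h2
      · exact hsymm _ _ hxy
      · rcases hq with rfl; exact hrefl _

/-- A 2-element block with x < y is a covering pair. -/
lemma blk_covBy (hT : IsTolerance T) {x y : L} (hB : IsBlock T ({x, y} : Set L))
    (hlt : x < y) : x ⋖ y := by
  obtain ⟨hrefl, hsymm, hcomp⟩ := hT
  refine ⟨hlt, fun z hxz hzy => ?_⟩
  have hx : x ∈ ({x, y} : Set L) := Set.mem_insert x _
  have hy : y ∈ ({x, y} : Set L) := Set.mem_insert_of_mem x rfl
  have hxy : T x y := hB.1 x hx y hy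
  have hzz : T z z := hrefl z
  have hzy' : T z y := by
    have := (hcomp x y z z hxy hzz).1
    simpa [sup_eq_right.mpr hxz.le, sup_eq_left.mpr hzy.le] using this
  have hxz' : T x z := by
    have := (hcomp x y z z hxy hzz).2
    simpa [inf_eq_left.mpr hxz.le, inf_eq_right.mpr hzy.le] using this
  have hYeq := hB.2 (insert z {x, y}) (Set.subset_insert _ _) ?_
  · have : z ∈ ({x, y} : Set L) := hYeq ▸ Set.mem_insert _ _
    rcases this with h | h
    · exact absurd h hxz.ne'
    · rcases h with h; exact absurd h hzy.ne
  · intro p hp q hq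
    rcases hp with rfl | rfl | hp
    · rcases hq with rfl | rfl | hq
      · exact hrefl _
      · exact hsymm _ _ hxz'
      · rcases hq with rfl; exact hzy'
    · rcases hq with rfl | rfl | hq
      · exact hxz'
      · exact hrefl _
      · rcases hq with rfl; exact hxy
    · rcases hp with rfl
      rcases hq with rfl | rfl | hq
      · exact hsymm _ _ hzy'
      · exact hsymm _ _ hxy
      · rcases hq with rfl; exact hrefl _

/-- Distinct related elements of a 2-uniform tolerance cover each other one way. -/
lemma covOr (hT : IsTwoUniform T) {x y : L} (hxy : T x y) (hne : x ≠ y) :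
    x ⋖ y ∨ y ⋖ x := by
  have hB := blk hT hxy hne
  rcases blk_comparable hT.1 hB with h | h
  · exact Or.inl (blk_covBy hT.1 hB (lt_of_le_of_ne h hne))
  · right
    rw [Set.pair_comm] at hB
    exact blk_covBy hT.1 hB (lt_of_le_of_ne h hne.symm)

end helpers

section main
variable {L : Type*} [Lattice L]

/-- Upper neighbours are unique. -/
lemma upper_uniq {T : L → L → Prop} (hT : IsTwoUniform T) {u a a' : L}
    (h1 : u ⋖ a) (hB1 : IsBlock T ({u, a} : Set L))
    (h2 : u ⋖ a') (hB2 : IsBlock T ({u, a'} : Set L)) : a = a' := by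
  have hua : T u a := hB1.1 u (Set.mem_insert _ _) a (Set.mem_insert_of_mem _ rfl)
  have hua' : T u a' := hB2.1 u (Set.mem_insert _ _) a' (Set.mem_insert_of_mem _ rfl)
  have hsup : T u (a ⊔ a') := by
    have := (hT.1.2.2 u a u a' hua hua').1
    simpa using this
  have hlt : u < a ⊔ a' := lt_of_lt_of_le h1.1 le_sup_left
  rcases covOr hT hsup hlt.ne with hcov | hcov
  · have ha : a = a ⊔ a' := by
      by_contra h
      exact hcov.2 h1.1 (lt_of_le_of_ne le_sup_left h)
    have ha' : a' = a ⊔ a' := by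
      by_contra h
      exact hcov.2 h2.1 (lt_of_le_of_ne le_sup_right h)
    exact ha.trans ha'.symm
  · exact absurd hcov.1 (not_lt_of_gt hlt)

/-- Core step: if T v u and u has upper neighbours a (for T) and b (for S), a ≠ b,
then v has an upper S-neighbour different from u. -/
lemma split_aux {T S : L → L → Prop} (hT : IsTwoUniform T) (hS : IsTwoUniform S)
    (hperm : ∀ x z : L, (∃ y, T x y ∧ S y z) → (∃ y, S x y ∧ T y z))
    {u v a b : L} (ha : u ⋖ a) (haB : IsBlock T ({u, a} : Set L))
    (hb : u ⋖ b) (hbB : IsBlock S ({u, b} : Set L)) (hab : a ≠ b)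
    (hvu : v ⋖ u) (hTvu : T v u) :
    ∃ d, v ⋖ d ∧ IsBlock S ({v, d} : Set L) ∧ d ≠ u := by
  have hub : S u b := hbB.1 u (Set.mem_insert _ _) b (Set.mem_insert_of_mem _ rfl)
  obtain ⟨y, hSvy, hTyb⟩ := hperm v b ⟨u, hTvu, hub⟩
  have hvb : v < b := lt_trans hvu.1 hb.1
  -- v ≠ y
  have hvy : v ≠ y := by
    rintro rfl
    rcases covOr hT hTyb hvb.ne with hcov | hcov
    · exact hcov.2 hvu.1 hb.1
    · exact absurd hcov.1 (not_lt_of_gt hvb)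
  -- y ≠ b
  have hyb : y ≠ b := by
    rintro rfl
    rcases covOr hS hSvy hvb.ne with hcov | hcov
    · exact hcov.2 hvu.1 hb.1
    · exact absurd hcov.1 (not_lt_of_gt hvb)
  -- v ⋖ y
  have hcvy : v ⋖ y := by
    rcases covOr hS hSvy hvy with hcov | hcov
    · exact hcov
    · exfalso
      have hyv : y < v := hcov.1
      have hyltb : y < b := lt_trans hyv hvb
      rcases covOr hT hTyb hyltb.ne with hcov' | hcov'
      · exact hcov'.2 hyv hvb
      · exact absurd hcov'.1 (not_lt_of_gt hyltb)
  -- y ≠ u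
  have hyu : y ≠ u := by
    intro h
    rw [h] at hTyb
    have hBub : IsBlock T ({u, b} : Set L) := blk hT hTyb hb.1.ne
    exact hab (upper_uniq hT ha haB hb hBub)
  exact ⟨y, hcvy, blk hS hSvy hvy, hyu⟩

end main

theorem stmt8 {L : Type*} [Lattice L] (hL : NoInfiniteChains L)
    (T S : L → L → Prop) (hT : IsTwoUniform T) (hS : IsTwoUniform S)
    (hperm : ∀ x z, Comp T S x z ↔ Comp S T x z)
    (u v a b : L) (ha : IsUpperNbr T a u) (hb : IsUpperNbr S b u) (hab : a ≠ b)
    (hvu : v ⋖ u) (hTS : T v u ∨ S v u) :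
    ∃ c d : L, IsUpperNbr T c v ∧ IsUpperNbr S d v ∧ c ≠ d := by
  rcases hTS with h | h
  · obtain ⟨d, hd1, hd2, hd3⟩ := split_aux hT hS (fun x z => (hperm x z).mp)
      ha.1 ha.2 hb.1 hb.2 hab hvu h
    exact ⟨u, d, ⟨hvu, blk hT h hvu.ne⟩, ⟨hd1, hd2⟩, fun he => hd3 he.symm⟩
  · obtain ⟨c, hc1, hc2, hc3⟩ := split_aux hS hT (fun x z => (hperm x z).mpr)
      hb.1 hb.2 ha.1 ha.2 hab.symm hvu h
    exact ⟨c, u, ⟨hc1, hc2⟩, ⟨hvu, blk hS h hvu.ne⟩, hc3⟩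
end

section
/- Let T and S be permuting 2-uniform tolerances on a lattice L without infinite chains. If u is an adherent (T,S)-bottom (i.e., u has a common upper T-neighbour and upper S-neighbour), v ≺ u, and (v,u) ∈ T ∪ S, then v is an adherent (T,S)-bottom. -/
section Aux
variable {L : Type*} [Lattice L] {T : L → L → Prop}

/-- Every clique extends to a block. -/
lemma exists_block_s9 (_hT : IsTwoUniform T) {C : Set L}
    (hC : ∀ x ∈ C, ∀ y ∈ C, T x y) : ∃ B, C ⊆ B ∧ IsBlock T B := by
  obtain ⟨M, hCM, hM⟩ := zorn_subset_nonempty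
    {D : Set L | ∀ x ∈ D, ∀ y ∈ D, T x y}
    (fun c hc hchain _ => ⟨⋃₀ c, by
      intro x hx y hy
      obtain ⟨Dx, hDx, hxD⟩ := hx
      obtain ⟨Dy, hDy, hyD⟩ := hy
      rcases hchain.total hDx hDy with h | h
      · exact hc hDy x (h hxD) y hyD
      · exact hc hDx x hxD y (h hyD), fun s hs => Set.subset_sUnion_of_mem hs⟩)
    C hC
  exact ⟨M, hCM, hM.1, fun Y hMY hY => (hM.2 hY hMY).antisymm hMY⟩

lemma no_three (hT : IsTwoUniform T) {x y z : L} (hxy : x ≠ y) (hxz : x ≠ z) (hyz : y ≠ z)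
    (h1 : T x y) (h2 : T x z) (h3 : T y z) : False := by
  have hrefl := hT.1.1
  have hsym := hT.1.2.1
  obtain ⟨B, hsub, hB⟩ := exists_block_s9 hT (C := {x, y, z}) (by
    intro p hp q hq
    rcases hp with rfl | rfl | rfl <;> rcases hq with rfl | rfl | rfl <;>
      first | exact hrefl _ | assumption | exact hsym _ _ h1 |
        exact hsym _ _ h2 | exact hsym _ _ h3)
  obtain ⟨p, q, hpq, rfl⟩ := hT.2 B hB
  have hx : x ∈ ({p, q} : Set L) := hsub (by simp)
  have hy : y ∈ ({p, q} : Set L) := hsub (by simp)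
  have hz : z ∈ ({p, q} : Set L) := hsub (by simp)
  simp only [Set.mem_insert_iff, Set.mem_singleton_iff] at hx hy hz
  rcases hx with rfl | rfl <;> rcases hy with rfl | rfl <;> rcases hz with rfl | rfl <;>
    simp_all

lemma pair_block (hT : IsTwoUniform T) {x y : L} (hxy : x ≠ y) (h : T x y) :
    IsBlock T {x, y} := by
  have hrefl := hT.1.1
  have hsym := hT.1.2.1
  obtain ⟨B, hsub, hB⟩ := exists_block_s9 hT (C := {x, y}) (by
    intro p hp q hq
    rcases hp with rfl | rfl <;> rcases hq with rfl | rfl <;>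
      first | exact hrefl _ | assumption | exact hsym _ _ h)
  obtain ⟨p, q, hpq, rfl⟩ := hT.2 B hB
  have hx : x ∈ ({p, q} : Set L) := hsub (by simp)
  have hy : y ∈ ({p, q} : Set L) := hsub (by simp)
  simp only [Set.mem_insert_iff, Set.mem_singleton_iff] at hx hy
  have : ({x, y} : Set L) = {p, q} := by
    rcases hx with rfl | rfl <;> rcases hy with rfl | rfl <;>
      first | rfl | exact Set.pair_comm _ _ | exact absurd rfl hxy | simp_all
  rw [this]; exact hB

/-- T-related distinct elements are comparable. -/
lemma lt_or_lt (hT : IsTwoUniform T) {x y : L} (hxy : x ≠ y) (h : T x y) :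
    x < y ∨ y < x := by
  have hrefl := hT.1.1
  have hsym := hT.1.2.1
  have h1 : T (x ⊓ y) x := by
    have := (hT.1.2.2 x x y x (hrefl x) (hsym _ _ h)).2
    simpa using this
  have h2 : T (x ⊓ y) y := by
    have := (hT.1.2.2 y y x y (hrefl y) h).2
    simpa [inf_comm] using this
  by_cases e1 : x ⊓ y = x
  · left; exact lt_of_le_of_ne (le_of_inf_eq e1) hxy
  by_cases e2 : x ⊓ y = y
  · right; exact lt_of_le_of_ne (inf_eq_right.mp e2) hxy.symm
  exact absurd (no_three hT e1 e2 hxy h1 h2 h) not_false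

/-- T-related elements with x < y form a cover. -/
lemma covby_of_lt (hT : IsTwoUniform T) {x y : L} (h : T x y) (hlt : x < y) : x ⋖ y := by
  refine ⟨hlt, fun z hxz hzy => ?_⟩
  have hrefl := hT.1.1
  have hsym := hT.1.2.1
  have h1 : T z y := by
    have := (hT.1.2.2 x y z z h (hrefl z)).1
    simpa [sup_eq_right.mpr hxz.le, sup_eq_left.mpr hzy.le] using this
  have h2 : T z x := by
    have := (hT.1.2.2 y x z z (hsym _ _ h) (hrefl z)).2
    simpa [inf_eq_right.mpr hzy.le, inf_eq_left.mpr hxz.le] using this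
  exact no_three hT hxz.ne hlt.ne hzy.ne (hsym _ _ h2) h h1

lemma covby_or (hT : IsTwoUniform T) {x y : L} (hxy : x ≠ y) (h : T x y) :
    x ⋖ y ∨ y ⋖ x := by
  rcases lt_or_lt hT hxy h with hl | hl
  · exact Or.inl (covby_of_lt hT h hl)
  · exact Or.inr (covby_of_lt hT (hT.1.2.1 _ _ h) hl)

lemma key {S : L → L → Prop} (hT : IsTwoUniform T) (hS : IsTwoUniform S)
    (hperm : ∀ x z, Comp T S x z → Comp S T x z)
    {u v a : L} (hvu : v ⋖ u) (hua : u ⋖ a)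
    (hTvu : T v u) (hTua : T u a) (hSua : S u a) : S v u := by
  by_contra hSvu
  obtain ⟨y, hSvy, hTya⟩ := hperm v a ⟨u, hTvu, hSua⟩
  have hva : v < a := hvu.lt.trans hua.lt
  have hyu : y ≠ u := fun h => hSvu (h ▸ hSvy)
  have hyv : y ≠ v := by
    rintro rfl
    exact no_three hT hvu.lt.ne hva.ne hua.lt.ne hTvu hTya hTua
  have hya : y ≠ a := by
    intro hE
    apply hSvu
    have h' := (hS.1.2.2 v a a u (hE ▸ hSvy) (hS.1.2.1 _ _ hSua)).2
    simpa [inf_eq_left.mpr hva.le, inf_eq_right.mpr hua.lt.le] using h'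
  -- y covers structure: v ⋖ y ⋖ a
  have hvy : v ⋖ y := by
    rcases covby_or hS hyv.symm hSvy with h | h
    · exact h
    · exfalso
      rcases covby_or hT hya hTya with h' | h'
      · exact h'.2 (h.lt.trans hvu.lt) hua.lt
      · exact lt_irrefl y ((h.lt.trans hva).trans h'.lt)
  have hyca : y ⋖ a := by
    rcases covby_or hT hya hTya with h | h
    · exact h
    · exact (hvy.2 hvu.lt (hua.lt.trans h.lt)).elim
  -- u ⊓ y = v
  have huy : u ⊓ y = v := by
    have h1 : v ≤ u ⊓ y := le_inf hvu.lt.le hvy.lt.le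
    have h2 : u ⊓ y < u := by
      rcases lt_or_eq_of_le (inf_le_left : u ⊓ y ≤ u) with h | h
      · exact h
      · exfalso
        have huy' : u ≤ y := h ▸ inf_le_right
        exact hua.2 (lt_of_le_of_ne huy' hyu.symm) hyca.lt
    rcases lt_or_eq_of_le h1 with h | h
    · exact (hvu.2 h h2).elim
    · exact h.symm
  -- T v a, giving a 3-clique {v, u, a}
  have hTva : T v a := by
    have := (hT.1.2.2 u a y a hTua hTya).2
    simpa [huy] using this
  exact no_three hT hvu.lt.ne hva.ne hua.lt.ne hTvu hTva hTua

end Aux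

theorem stmt9 {L : Type*} [Lattice L] (hL : NoInfiniteChains L)
    (T S : L → L → Prop) (hT : IsTwoUniform T) (hS : IsTwoUniform S)
    (hperm : ∀ x z, Comp T S x z ↔ Comp S T x z)
    (u v a : L) (ha : IsUpperNbr T a u) (ha2 : IsUpperNbr S a u)
    (hvu : v ⋖ u) (hTS : T v u ∨ S v u) :
    ∃ c : L, IsUpperNbr T c v ∧ IsUpperNbr S c v := by
  have hTua : T u a := ha.2.1 u (by simp) a (by simp)
  have hSua : S u a := ha2.2.1 u (by simp) a (by simp)
  have hboth : T v u ∧ S v u := by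
    rcases hTS with h | h
    · exact ⟨h, key hT hS (fun x z => (hperm x z).mp) hvu ha.1 h hTua hSua⟩
    · exact ⟨key hS hT (fun x z => (hperm x z).mpr) hvu ha2.1 h hSua hTua, h⟩
  exact ⟨u, ⟨hvu, pair_block hT hvu.lt.ne hboth.1⟩, ⟨hvu, pair_block hS hvu.lt.ne hboth.2⟩⟩
end

section
/- Let T and S be 2-uniform tolerances on a lattice L without infinite chains. Then T and S permute (T∘S = S∘T) if and only if T and S are amicable. -/
namespace Stmt12Aux

variable {L : Type*} [Lattice L] {T S : L → L → Prop}

lemma tol_refl (h : IsTolerance T) (x : L) : T x x := h.1 x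

lemma tol_symm (h : IsTolerance T) {x y : L} (hxy : T x y) : T y x := h.2.1 x y hxy

lemma tol_sup (h : IsTolerance T) {a b c d : L} (h1 : T a b) (h2 : T c d) :
    T (a ⊔ c) (b ⊔ d) := (h.2.2 a b c d h1 h2).1

lemma tol_inf (h : IsTolerance T) {a b c d : L} (h1 : T a b) (h2 : T c d) :
    T (a ⊓ c) (b ⊓ d) := (h.2.2 a b c d h1 h2).2

lemma block_rel {X : Set L} (hX : IsBlock T X) {x y : L} (hx : x ∈ X) (hy : y ∈ X) :
    T x y := hX.1 x hx y hy

lemma pair_block_rel {a b : L} (hX : IsBlock T {a, b}) : T a b :=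
  hX.1 a (by simp) b (by simp)

lemma exists_block (hT : IsTolerance T) {x y : L} (hxy : T x y) :
    ∃ X : Set L, IsBlock T X ∧ x ∈ X ∧ y ∈ X := by
  classical
  set P : Set (Set L) := {Y | ∀ a ∈ Y, ∀ b ∈ Y, T a b} with hPdef
  have h0 : ({x, y} : Set L) ∈ P := by
    intro a ha b hb
    simp only [Set.mem_insert_iff, Set.mem_singleton_iff] at ha hb
    rcases ha with rfl | rfl <;> rcases hb with rfl | rfl
    exacts [tol_refl hT _, hxy, tol_symm hT hxy, tol_refl hT _]
  have hH : ∀ c ⊆ P, IsChain (· ⊆ ·) c → c.Nonempty → ∃ ub ∈ P, ∀ s ∈ c, s ⊆ ub := by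
    intro c hcP hchain _
    refine ⟨⋃₀ c, ?_, fun s hs => Set.subset_sUnion_of_mem hs⟩
    rintro a ⟨A, hA, haA⟩ b ⟨B, hB, hbB⟩
    rcases hchain.total hA hB with h | h
    · exact hcP hB a (h haA) b hbB
    · exact hcP hA a haA b (h hbB)
  obtain ⟨M, hsub, hMmax⟩ := zorn_subset_nonempty P hH _ h0
  refine ⟨M, ⟨hMmax.1, fun Y hMY hY => ?_⟩, hsub (by simp), hsub (by simp)⟩
  exact le_antisymm (hMmax.2 hY hMY) hMY

lemma block_pair_lt_cover (hT : IsTwoUniform T) {a b : L} (hX : IsBlock T {a, b})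
    (hab : a < b) : a ⋖ b := by
  refine ⟨hab, fun c hac hcb => ?_⟩
  have Tab : T a b := pair_block_rel hX
  have Tcb : T c b := by
    have h := tol_sup hT.1 Tab (tol_refl hT.1 c)
    rwa [sup_eq_right.mpr hac.le, sup_eq_left.mpr hcb.le] at h
  have Tac : T a c := by
    have h := tol_inf hT.1 Tab (tol_refl hT.1 c)
    rwa [inf_eq_left.mpr hac.le, inf_eq_right.mpr hcb.le] at h
  have hY : insert c ({a, b} : Set L) = {a, b} := by
    apply hX.2 _ (Set.subset_insert _ _)
    intro p hp q hq
    simp only [Set.mem_insert_iff, Set.mem_singleton_iff] at hp hq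
    rcases hp with rfl | rfl | rfl <;> rcases hq with rfl | rfl | rfl
    exacts [tol_refl hT.1 _, tol_symm hT.1 Tac, Tcb,
      Tac, tol_refl hT.1 _, Tab, tol_symm hT.1 Tcb, tol_symm hT.1 Tab, tol_refl hT.1 _]
  have hc : c ∈ ({a, b} : Set L) := hY ▸ Set.mem_insert _ _
  rcases hc with rfl | rfl
  · exact hac.ne rfl
  · exact hcb.ne rfl

lemma block_sup_mem (hT : IsTolerance T) {X : Set L} (hX : IsBlock T X) {a b : L}
    (ha : a ∈ X) (hb : b ∈ X) : a ⊔ b ∈ X := by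
  have key : ∀ q ∈ X, T (a ⊔ b) q := by
    intro q hq
    have h := tol_sup hT (hX.1 a ha q hq) (hX.1 b hb q hq)
    rwa [sup_idem] at h
  have hY : insert (a ⊔ b) X = X := by
    apply hX.2 _ (Set.subset_insert _ _)
    intro p hp q hq
    rcases hp with rfl | hp
    · rcases hq with rfl | hq
      · exact tol_refl hT _
      · exact key q hq
    · rcases hq with rfl | hq
      · exact tol_symm hT (key p hp)
      · exact hX.1 p hp q hq
  exact hY ▸ Set.mem_insert _ _

lemma block_cover (hT : IsTwoUniform T) {X : Set L} (hX : IsBlock T X) :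
    ∃ a b, a ⋖ b ∧ X = {a, b} := by
  obtain ⟨a, b, hab, rfl⟩ := hT.2 X hX
  have hsup : a ⊔ b ∈ ({a, b} : Set L) := block_sup_mem hT.1 hX (by simp) (by simp)
  rcases hsup with h | h
  · -- a ⊔ b = a, so b ≤ a
    have hba : b < a := lt_of_le_of_ne (sup_eq_left.mp h) (Ne.symm hab)
    exact ⟨b, a, block_pair_lt_cover hT (Set.pair_comm a b ▸ hX) hba, Set.pair_comm a b⟩
  · have hab' : a < b := lt_of_le_of_ne (sup_eq_right.mp h) hab
    exact ⟨a, b, block_pair_lt_cover hT hX hab', rfl⟩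

lemma rel_cases (hT : IsTwoUniform T) {x y : L} (hxy : T x y) (hne : x ≠ y) :
    (x ⋖ y ∧ IsBlock T {x, y}) ∨ (y ⋖ x ∧ IsBlock T {y, x}) := by
  obtain ⟨X, hX, hx, hy⟩ := exists_block hT.1 hxy
  obtain ⟨a, b, hab, rfl⟩ := block_cover hT hX
  simp only [Set.mem_insert_iff, Set.mem_singleton_iff] at hx hy
  rcases hx with rfl | rfl
  · rcases hy with rfl | rfl
    · exact absurd rfl hne
    · exact Or.inl ⟨hab, hX⟩
  · rcases hy with rfl | rfl
    · exact Or.inr ⟨hab, hX⟩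
    · exact absurd rfl hne

/-- no T-relation between elements with something strictly in between -/
lemma no_rel_btw (hT : IsTwoUniform T) {a b c : L} (hac : a < c) (hcb : c < b)
    (h : T a b) : False := by
  rcases rel_cases hT h (hac.trans hcb).ne with ⟨hcov, _⟩ | ⟨hcov, _⟩
  · exact hcov.2 hac hcb
  · exact (hac.trans hcb).asymm hcov.1

lemma upper_unique (hT : IsTwoUniform T) {u w₁ w₂ : L}
    (h1 : u ⋖ w₁) (hb1 : IsBlock T {u, w₁}) (h2 : u ⋖ w₂) (hb2 : IsBlock T {u, w₂}) :
    w₁ = w₂ := by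
  by_contra hne
  have h := tol_sup hT.1 (pair_block_rel hb1) (pair_block_rel hb2)
  rw [sup_idem] at h
  by_cases hle : w₂ ≤ w₁
  · exact h1.2 h2.1 (lt_of_le_of_ne hle (Ne.symm hne))
  · have hlt : w₁ < w₁ ⊔ w₂ := lt_of_le_of_ne le_sup_left (fun hh => hle (sup_eq_left.mp hh.symm))
    exact no_rel_btw hT h1.1 hlt h

lemma lower_unique (hT : IsTwoUniform T) {u v₁ v₂ : L}
    (h1 : v₁ ⋖ u) (hb1 : IsBlock T {v₁, u}) (h2 : v₂ ⋖ u) (hb2 : IsBlock T {v₂, u}) :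
    v₁ = v₂ := by
  by_contra hne
  have h := tol_inf hT.1 (pair_block_rel hb1) (pair_block_rel hb2)
  rw [inf_idem] at h
  by_cases hle : v₁ ≤ v₂
  · exact h1.2 (lt_of_le_of_ne hle hne) h2.1
  · have hlt : v₁ ⊓ v₂ < v₁ := lt_of_le_of_ne inf_le_left (fun hh => hle (inf_eq_left.mp hh))
    exact no_rel_btw hT hlt h1.1 h

lemma exists_partner (hT : IsTwoUniform T) (x : L) : ∃ y, T x y ∧ y ≠ x := by
  obtain ⟨X, hX, hx, _⟩ := exists_block hT.1 (tol_refl hT.1 x)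
  obtain ⟨a, b, hab, rfl⟩ := block_cover hT hX
  simp only [Set.mem_insert_iff, Set.mem_singleton_iff] at hx
  rcases hx with rfl | rfl
  · exact ⟨b, pair_block_rel hX, hab.ne'⟩
  · exact ⟨a, tol_symm hT.1 (pair_block_rel hX), hab.ne⟩

/-- if z is not a T-bottom, then any partner is a lower cover -/
lemma rel_below_of_not_bottom (hT : IsTwoUniform T) {z t : L}
    (hnb : ¬ IsRBottom T z) (h : T z t) (hne : t ≠ z) :
    t ⋖ z ∧ IsBlock T {t, z} := by
  rcases rel_cases hT h (Ne.symm hne) with ⟨hcov, hb⟩ | ⟨hcov, hb⟩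
  · exact absurd ⟨t, hcov, hb⟩ hnb
  · exact ⟨hcov, hb⟩

lemma rel_above_of_not_top (hT : IsTwoUniform T) {z t : L}
    (hnt : ¬ IsRTop T z) (h : T z t) (hne : t ≠ z) :
    z ⋖ t ∧ IsBlock T {z, t} := by
  rcases rel_cases hT h (Ne.symm hne) with ⟨hcov, hb⟩ | ⟨hcov, hb⟩
  · exact ⟨hcov, hb⟩
  · exact absurd ⟨t, hcov, Set.pair_comm z t ▸ hb⟩ hnt

/-- the unique T-partner above y is x -/
lemma upper_eq (hT : IsTwoUniform T) {y x t : L} (hb : IsBlock T {y, x}) (hc : y ⋖ x)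
    (ht : T y t) (hlt : y < t) : t = x := by
  rcases rel_cases hT ht hlt.ne with ⟨hcov, hb'⟩ | ⟨hcov, _⟩
  · exact upper_unique hT hcov hb' hc hb
  · exact absurd hlt hcov.1.asymm

lemma lower_eq (hT : IsTwoUniform T) {y v t : L} (hb : IsBlock T {v, y}) (hc : v ⋖ y)
    (ht : T y t) (hlt : t < y) : t = v := by
  rcases rel_cases hT (tol_symm hT.1 ht) hlt.ne with ⟨hcov, hb'⟩ | ⟨hcov, _⟩
  · exact lower_unique hT hcov hb' hc hb
  · exact absurd hlt hcov.1.asymm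

lemma wf_of_noInfiniteChains (hL : NoInfiniteChains L) :
    WellFounded ((· < ·) : L → L → Prop) := by
  rw [RelEmbedding.wellFounded_iff_isEmpty]
  constructor
  intro f
  have hinj : Function.Injective f := f.injective
  have hchain : IsChain (· ≤ ·) (Set.range f) := by
    rintro _ ⟨m, rfl⟩ _ ⟨n, rfl⟩ hne
    rcases lt_trichotomy m n with h | h | h
    · exact Or.inr (f.map_rel_iff.mpr h).le
    · exact absurd (congrArg f h) hne
    · exact Or.inl (f.map_rel_iff.mpr h).le
  exact (Set.infinite_range_of_injective hinj) (hL _ hchain)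

/-- The crucial lemma: pattern S-block below, T-block above. -/
lemma crux (hL : NoInfiniteChains L) (hT : IsTwoUniform T) (hS : IsTwoUniform S)
    (ham : Amicable T S) :
    ∀ x y z : L, z ⋖ y → y ⋖ x → IsBlock S {z, y} → IsBlock T {y, x} →
      ∃ y', S x y' ∧ T y' z := by
  have wf := wf_of_noInfiniteChains hL
  intro x
  induction x using WellFounded.induction wf with
  | _ x IH =>
  intro y z hzy hyx hSb hTb
  have Szy : S z y := pair_block_rel hSb
  have Tyx : T y x := pair_block_rel hTb
  by_cases hzb : IsRBottom T z
  · obtain ⟨w, hzw, hTzw⟩ := hzb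
    by_cases hwy : w = y
    · -- Case 2: {z,y} is a T-block
      rw [hwy] at hzw hTzw
      have yTt : IsRTop T y := ⟨z, hzy, hTzw⟩
      have ySt : IsRTop S y := ⟨z, hzy, hSb⟩
      have xtops := ham.1 y x yTt ySt hyx (Or.inl Tyx)
      obtain ⟨p, hpx, hSpx⟩ := xtops.2
      by_cases hpy : p = y
      · rw [hpy] at hSpx
        exact ⟨y, tol_symm hS.1 (pair_block_rel hSpx), tol_symm hT.1 (pair_block_rel hTzw)⟩
      · exfalso
        have Spx : S p x := pair_block_rel hSpx
        have h1 : S (p ⊓ z) y := by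
          have h := tol_inf hS.1 Spx Szy
          rwa [inf_eq_right.mpr hyx.1.le] at h
        have hpz : p ⊓ z = z := by
          refine lower_eq hS hSb hzy (tol_symm hS.1 h1) ?_
          exact lt_of_le_of_lt inf_le_right hzy.1
        have hzp : z ≤ p := by rw [← hpz]; exact inf_le_left
        have h2 : T p (y ⊔ p) := by
          have h := tol_sup hT.1 (pair_block_rel hTzw) (tol_refl hT.1 p)
          rwa [sup_eq_right.mpr hzp] at h
        have hyp : ¬ y ≤ p := by
          intro hle
          rcases lt_or_eq_of_le hle with hlt | he
          · exact hyx.2 hlt hpx.1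
          · exact hpy he.symm
        have hypx : y ⊔ p = x := by
          have hlt : p < y ⊔ p := lt_of_le_of_ne le_sup_right
            (fun hh => hyp (sup_eq_right.mp hh.symm))
          have hlex : y ⊔ p ≤ x := sup_le hyx.1.le hpx.1.le
          rcases lt_or_eq_of_le hlex with hlt2 | he
          · exact absurd hlt2 (hpx.2 hlt)
          · exact he
        rw [hypx] at h2
        rcases rel_cases hT h2 hpx.1.ne with ⟨hcov, hb'⟩ | ⟨hcov, _⟩
        · exact hpy (lower_unique hT hcov hb' hyx hTb)
        · exact hpx.1.asymm hcov.1
    · -- Case 1: w ≠ y, witness w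
      have Tzw : T z w := pair_block_rel hTzw
      have h1 : T y (w ⊔ x) := by
        have h := tol_sup hT.1 Tzw Tyx
        rwa [sup_eq_right.mpr hzy.1.le] at h
      have hwx : w ⊔ x = x := by
        have := upper_eq hT hTb hyx h1 (lt_of_lt_of_le hyx.1 le_sup_right)
        exact this
      have hwlex : w ≤ x := sup_eq_right.mp hwx
      have hwy' : ¬ w ≤ y := by
        intro hle
        rcases lt_or_eq_of_le hle with hlt | he
        · exact hzy.2 hzw.1 hlt
        · exact hwy he
      have hwyx : w ⊔ y = x := by
        have hlt : y < w ⊔ y := lt_of_le_of_ne le_sup_right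
          (fun hh => hwy' (sup_eq_right.mp hh.symm))
        have hlex : w ⊔ y ≤ x := sup_le hwlex hyx.1.le
        rcases lt_or_eq_of_le hlex with hlt2 | he
        · exact absurd hlt2 (hyx.2 hlt)
        · exact he
      have h2 : S w x := by
        have h := tol_sup hS.1 Szy (tol_refl hS.1 w)
        rwa [sup_eq_right.mpr hzw.1.le, sup_comm y w, hwyx] at h
      exact ⟨w, tol_symm hS.1 h2, tol_symm hT.1 Tzw⟩
  · -- Case 3: z is not a T-bottom; derive a contradiction
    exfalso
    obtain ⟨t0, hTzt0, ht0ne⟩ := exists_partner hT z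
    obtain ⟨hv'z, hTv'⟩ := rel_below_of_not_bottom hT hzb hTzt0 ht0ne
    set v' := t0 with hv'def
    have Tv'z : T v' z := pair_block_rel hTv'
    by_cases hyTtop : IsRTop T y
    · -- Case 3a
      have ySt : IsRTop S y := ⟨z, hzy, hSb⟩
      have xtops := ham.1 y x hyTtop ySt hyx (Or.inl Tyx)
      obtain ⟨p, hpx, hSpx⟩ := xtops.2
      by_cases hpy : p = y
      · -- {y,x} is an S-block; y is two-fold bottom; amic(2) gives z T-bottom
        rw [hpy] at hSpx
        have ybS : IsRBottom S y := ⟨x, hyx, hSpx⟩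
        have ybT : IsRBottom T y := ⟨x, hyx, hTb⟩
        exact hzb (ham.2 y z ybT ybS hzy (Or.inr Szy)).1
      · have Spx : S p x := pair_block_rel hSpx
        have h1 : S (p ⊓ z) y := by
          have h := tol_inf hS.1 Spx Szy
          rwa [inf_eq_right.mpr hyx.1.le] at h
        have hpz : p ⊓ z = z :=
          lower_eq hS hSb hzy (tol_symm hS.1 h1) (lt_of_le_of_lt inf_le_right hzy.1)
        have hzp : z ≤ p := by rw [← hpz]; exact inf_le_left
        have h2 : T (y ⊓ p) p := by
          have h := tol_inf hT.1 Tyx (tol_refl hT.1 p)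
          rwa [inf_eq_right.mpr hpx.1.le] at h
        have hyp : ¬ y ≤ p := by
          intro hle
          rcases lt_or_eq_of_le hle with hlt | he
          · exact hyx.2 hlt hpx.1
          · exact hpy he.symm
        have hypz : y ⊓ p = z := by
          have hle1 : z ≤ y ⊓ p := le_inf hzy.1.le hzp
          have hlt : y ⊓ p < y := lt_of_le_of_ne inf_le_left
            (fun hh => hyp (inf_eq_left.mp hh))
          rcases lt_or_eq_of_le hle1 with hlt2 | he
          · exact absurd hlt (hzy.2 hlt2)
          · exact he.symm
        rw [hypz] at h2
        have hzpne : z ≠ p := by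
          rintro rfl
          exact hpx.2 hzy.1 hyx.1
        rcases rel_cases hT h2 hzpne with ⟨hcov, hb'⟩ | ⟨hcov, _⟩
        · exact hzb ⟨p, hcov, hb'⟩
        · exact (lt_of_le_of_ne hzp hzpne).asymm hcov.1
    · -- Case 3b: y is not a T-top
      by_cases hySb : IsRBottom S y
      · have ybT : IsRBottom T y := ⟨x, hyx, hTb⟩
        exact hzb (ham.2 y z ybT hySb hzy (Or.inr Szy)).1
      · by_cases hzSt : IsRTop S z
        · have zTt : IsRTop T z := ⟨v', hv'z, hTv'⟩
          exact hyTtop (ham.1 z y zTt hzSt hzy (Or.inr Szy)).1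
        · by_cases hv'Sb : IsRBottom S v'
          · obtain ⟨w'', hv'w'', hSv'w''⟩ := hv'Sb
            have Sv'w'' : S v' w'' := pair_block_rel hSv'w''
            have h1 : S z (w'' ⊔ y) := by
              have h := tol_sup hS.1 Sv'w'' Szy
              rwa [sup_eq_right.mpr hv'z.1.le] at h
            have hw''y : w'' ⊔ y = y :=
              upper_eq hS hSb hzy h1 (lt_of_lt_of_le hzy.1 le_sup_right)
            have hw''ley : w'' ≤ y := sup_eq_left.mp (by rwa [sup_comm] at hw''y)
            have hw''ne : w'' ≠ y := by
              rintro rfl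
              exact hv'w''.2 hv'z.1 hzy.1
            have hw''nlez : ¬ w'' ≤ z := by
              intro hle
              rcases lt_or_eq_of_le hle with hlt | he
              · exact hv'z.2 hv'w''.1 hlt
              · subst he
                rcases rel_cases hS Sv'w'' hv'w''.1.ne with ⟨hcov, hb'⟩ | ⟨hcov, _⟩
                · exact hzSt ⟨v', hcov, hb'⟩
                · exact hv'w''.1.asymm hcov.1
            have hw''zy : w'' ⊔ z = y := by
              have hlt : z < w'' ⊔ z := lt_of_le_of_ne le_sup_right
                (fun hh => hw''nlez (sup_eq_right.mp hh.symm))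
              have hlex : w'' ⊔ z ≤ y := sup_le hw''ley hzy.1.le
              rcases lt_or_eq_of_le hlex with hlt2 | he
              · exact absurd hlt2 (hzy.2 hlt)
              · exact he
            have h2 : T w'' y := by
              have h := tol_sup hT.1 Tv'z (tol_refl hT.1 w'')
              rwa [sup_eq_right.mpr hv'w''.1.le, sup_comm z w'', hw''zy] at h
            have hw''lty : w'' < y := lt_of_le_of_ne hw''ley hw''ne
            rcases rel_cases hT h2 hw''ne with ⟨hcov, hb'⟩ | ⟨hcov, _⟩
            · exact hyTtop ⟨w'', hcov, hb'⟩
            · exact hw''lty.asymm hcov.1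
          · -- v' is an S-top via s'
            obtain ⟨s0, hSv's0, hs0ne⟩ := exists_partner hS v'
            obtain ⟨hs'v', hSs'⟩ := rel_below_of_not_bottom hS hv'Sb hSv's0 hs0ne
            set s' := s0 with hs'def
            by_cases hv'Tt : IsRTop T v'
            · have v'St : IsRTop S v' := ⟨s', hs'v', hSs'⟩
              exact hzSt (ham.1 v' z hv'Tt v'St hv'z (Or.inl Tv'z)).2
            · -- apply IH at z
              obtain ⟨y₁, hSzy₁, hTy₁s'⟩ :=
                IH z (hzy.1.trans hyx.1) v' s' hs'v' hv'z hSs' hTv'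
              by_cases hy₁z : y₁ = z
              · subst hy₁z
                exact no_rel_btw hT hs'v'.1 hv'z.1 (tol_symm hT.1 hTy₁s')
              · rcases rel_cases hS hSzy₁ (Ne.symm hy₁z) with ⟨hcov, hb'⟩ | ⟨hcov, hb'⟩
                · have := upper_unique hS hcov hb' hzy hSb
                  subst this
                  exact no_rel_btw hT (hs'v'.1.trans hv'z.1) hzy.1 (tol_symm hT.1 hTy₁s')
                · exact hzSt ⟨y₁, hcov, hb'⟩

lemma noInfiniteChains_dual (hL : NoInfiniteChains L) : NoInfiniteChains Lᵒᵈ := by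
  intro C hC
  exact hL C (fun a ha b hb hne => (hC ha hb hne).symm)

lemma twoUniform_dual (hT : IsTwoUniform T) : IsTwoUniform (L := Lᵒᵈ) T := by
  refine ⟨⟨hT.1.1, hT.1.2.1, fun a b c d h1 h2 => ?_⟩, fun X hX => hT.2 X hX⟩
  exact ⟨(hT.1.2.2 a b c d h1 h2).2, (hT.1.2.2 a b c d h1 h2).1⟩

lemma isRBottom_of_dual_top {R : L → L → Prop} {u : Lᵒᵈ}
    (h : IsRTop (L := Lᵒᵈ) R u) : IsRBottom R (OrderDual.ofDual u) := by
  obtain ⟨w, hc, hb⟩ := h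
  exact ⟨OrderDual.ofDual w, toDual_covBy_toDual_iff.mp hc, Set.pair_comm w u ▸ hb⟩

lemma isRTop_of_dual_bottom {R : L → L → Prop} {u : Lᵒᵈ}
    (h : IsRBottom (L := Lᵒᵈ) R u) : IsRTop R (OrderDual.ofDual u) := by
  obtain ⟨w, hc, hb⟩ := h
  exact ⟨OrderDual.ofDual w, toDual_covBy_toDual_iff.mp hc, Set.pair_comm u w ▸ hb⟩

lemma dual_top_of_isRBottom {R : L → L → Prop} {u : L}
    (h : IsRBottom R u) : IsRTop (L := Lᵒᵈ) R (OrderDual.toDual u) := by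
  obtain ⟨w, hc, hb⟩ := h
  exact ⟨OrderDual.toDual w, toDual_covBy_toDual_iff.mpr hc, Set.pair_comm u w ▸ hb⟩

lemma dual_bottom_of_isRTop {R : L → L → Prop} {u : L}
    (h : IsRTop R u) : IsRBottom (L := Lᵒᵈ) R (OrderDual.toDual u) := by
  obtain ⟨w, hc, hb⟩ := h
  exact ⟨OrderDual.toDual w, toDual_covBy_toDual_iff.mpr hc, Set.pair_comm w u ▸ hb⟩

lemma amicable_dual (hT : IsTolerance T) (hS : IsTolerance S) (ham : Amicable T S) :
    Amicable (L := Lᵒᵈ) T S := by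
  constructor
  · intro u v hTt hSt hcov hor
    have h := ham.2 (OrderDual.ofDual u) (OrderDual.ofDual v)
      (isRBottom_of_dual_top hTt) (isRBottom_of_dual_top hSt)
      (toDual_covBy_toDual_iff.mp hcov)
      (hor.imp (fun h => hT.2.1 _ _ h) (fun h => hS.2.1 _ _ h))
    exact ⟨dual_top_of_isRBottom h.1, dual_top_of_isRBottom h.2⟩
  · intro u v hTb hSb hcov hor
    have h := ham.1 (OrderDual.ofDual u) (OrderDual.ofDual v)
      (isRTop_of_dual_bottom hTb) (isRTop_of_dual_bottom hSb)
      (toDual_covBy_toDual_iff.mp hcov)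
      (hor.imp (fun h => hT.2.1 _ _ h) (fun h => hS.2.1 _ _ h))
    exact ⟨dual_bottom_of_isRTop h.1, dual_bottom_of_isRTop h.2⟩

lemma dual_crux (hL : NoInfiniteChains L) (hT : IsTwoUniform T) (hS : IsTwoUniform S)
    (ham : Amicable T S) :
    ∀ x y z : L, x ⋖ y → y ⋖ z → IsBlock T {x, y} → IsBlock S {y, z} →
      ∃ y', S x y' ∧ T y' z := by
  intro x y z hxy hyz hTb hSb
  have hSb' : IsBlock (L := Lᵒᵈ) S {OrderDual.toDual z, OrderDual.toDual y} :=
    Set.pair_comm y z ▸ hSb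
  have hTb' : IsBlock (L := Lᵒᵈ) T {OrderDual.toDual y, OrderDual.toDual x} :=
    Set.pair_comm x y ▸ hTb
  have h1 := noInfiniteChains_dual hL
  have h2 := twoUniform_dual hT
  have h3 := twoUniform_dual hS
  have h4 := amicable_dual hT.1 hS.1 ham
  have h := crux (L := Lᵒᵈ) h1 h2 h3 h4
    (OrderDual.toDual x) (OrderDual.toDual y) (OrderDual.toDual z)
    (toDual_covBy_toDual_iff.mpr hyz) (toDual_covBy_toDual_iff.mpr hxy)
    hSb' hTb'
  exact h

lemma amicable_symm (ham : Amicable T S) : Amicable S T :=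
  ⟨fun u v h1 h2 hc hor => (ham.1 u v h2 h1 hc hor.symm).symm,
   fun u v h1 h2 hc hor => (ham.2 u v h2 h1 hc hor.symm).symm⟩

lemma one_dir (hL : NoInfiniteChains L) (hT : IsTwoUniform T) (hS : IsTwoUniform S)
    (ham : Amicable T S) {x z : L} (h : Comp T S x z) : Comp S T x z := by
  obtain ⟨y, Txy, Syz⟩ := h
  by_cases hxy : x = y
  · exact ⟨z, hxy ▸ Syz, tol_refl hT.1 z⟩
  by_cases hyz : y = z
  · exact ⟨x, tol_refl hS.1 x, hyz ▸ Txy⟩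
  rcases rel_cases hT Txy hxy with ⟨hc1, hb1⟩ | ⟨hc1, hb1⟩ <;>
    rcases rel_cases hS Syz hyz with ⟨hc2, hb2⟩ | ⟨hc2, hb2⟩
  · exact dual_crux hL hT hS ham x y z hc1 hc2 hb1 hb2
  · refine ⟨x ⊓ z, ?_, ?_⟩
    · have h := tol_inf hS.1 Syz (tol_refl hS.1 x)
      rwa [inf_eq_right.mpr hc1.1.le, inf_comm z x] at h
    · have h := tol_inf hT.1 Txy (tol_refl hT.1 z)
      rwa [inf_eq_right.mpr hc2.1.le] at h
  · refine ⟨x ⊔ z, ?_, ?_⟩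
    · have h := tol_sup hS.1 Syz (tol_refl hS.1 x)
      rwa [sup_eq_right.mpr hc1.1.le, sup_comm z x] at h
    · have h := tol_sup hT.1 Txy (tol_refl hT.1 z)
      rwa [sup_eq_right.mpr hc2.1.le] at h
  · exact crux hL hT hS ham x y z hc2 hc1 hb2 hb1

lemma amicable_of_permute (hT : IsTwoUniform T) (hS : IsTwoUniform S)
    (hperm : ∀ x z, Comp T S x z ↔ Comp S T x z) : Amicable T S := by
  constructor
  · intro u v hTt hSt huv hor
    obtain ⟨a, hau, hTa⟩ := hTt
    obtain ⟨b, hbu, hSb⟩ := hSt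
    rcases hor with hTuv | hSuv
    · have hbv : IsBlock T {u, v} := by
        rcases rel_cases hT hTuv huv.ne with ⟨_, hb⟩ | ⟨hc, _⟩
        · exact hb
        · exact absurd huv.1 hc.1.asymm
      have vT : IsRTop T v := ⟨u, huv, hbv⟩
      have hcomp : Comp T S b v := (hperm b v).mpr ⟨u, pair_block_rel hSb, hTuv⟩
      obtain ⟨y', Tby', Sy'v⟩ := hcomp
      have hy'v : y' ≠ v := by rintro rfl; exact no_rel_btw hT hbu.1 huv.1 Tby'
      rcases rel_cases hS Sy'v hy'v with ⟨hc, hb⟩ | ⟨hc, _⟩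
      · exact ⟨vT, ⟨y', hc, hb⟩⟩
      · exact absurd Tby' (fun h => no_rel_btw hT hbu.1 (huv.1.trans hc.1) h)
    · have hbv : IsBlock S {u, v} := by
        rcases rel_cases hS hSuv huv.ne with ⟨_, hb⟩ | ⟨hc, _⟩
        · exact hb
        · exact absurd huv.1 hc.1.asymm
      have vS : IsRTop S v := ⟨u, huv, hbv⟩
      have hcomp : Comp S T a v := (hperm a v).mp ⟨u, pair_block_rel hTa, hSuv⟩
      obtain ⟨y', Say', Ty'v⟩ := hcomp
      have hy'v : y' ≠ v := by rintro rfl; exact no_rel_btw hS hau.1 huv.1 Say'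
      rcases rel_cases hT Ty'v hy'v with ⟨hc, hb⟩ | ⟨hc, _⟩
      · exact ⟨⟨y', hc, hb⟩, vS⟩
      · exact absurd Say' (fun h => no_rel_btw hS hau.1 (huv.1.trans hc.1) h)
  · intro u v hTb hSb hvu hor
    obtain ⟨a, hua, hTa⟩ := hTb
    obtain ⟨b, hub, hSbb⟩ := hSb
    rcases hor with hTvu | hSvu
    · have hbv : IsBlock T {v, u} := by
        rcases rel_cases hT hTvu hvu.ne with ⟨_, hb⟩ | ⟨hc, _⟩
        · exact hb
        · exact absurd hvu.1 hc.1.asymm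
      have vT : IsRBottom T v := ⟨u, hvu, hbv⟩
      have hcomp : Comp S T v b := (hperm v b).mp ⟨u, hTvu, pair_block_rel hSbb⟩
      obtain ⟨y', Svy', Ty'b⟩ := hcomp
      have hvy' : v ≠ y' := by rintro rfl; exact no_rel_btw hT hvu.1 hub.1 Ty'b
      rcases rel_cases hS Svy' hvy' with ⟨hc, hb⟩ | ⟨hc, _⟩
      · exact ⟨vT, ⟨y', hc, hb⟩⟩
      · exact absurd Ty'b (fun h => no_rel_btw hT hc.1 (hvu.1.trans hub.1) h)
    · have hbv : IsBlock S {v, u} := by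
        rcases rel_cases hS hSvu hvu.ne with ⟨_, hb⟩ | ⟨hc, _⟩
        · exact hb
        · exact absurd hvu.1 hc.1.asymm
      have vS : IsRBottom S v := ⟨u, hvu, hbv⟩
      have hcomp : Comp T S v a := (hperm v a).mpr ⟨u, hSvu, pair_block_rel hTa⟩
      obtain ⟨y', Tvy', Sy'a⟩ := hcomp
      have hvy' : v ≠ y' := by rintro rfl; exact no_rel_btw hS hvu.1 hua.1 Sy'a
      rcases rel_cases hT Tvy' hvy' with ⟨hc, hb⟩ | ⟨hc, _⟩
      · exact ⟨⟨y', hc, hb⟩, vS⟩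
      · exact absurd Sy'a (fun h => no_rel_btw hS hc.1 (hvu.1.trans hua.1) h)

end Stmt12Aux

theorem stmt12 {L : Type*} [Lattice L] (hL : NoInfiniteChains L)
    (T S : L → L → Prop) (hT : IsTwoUniform T) (hS : IsTwoUniform S) :
    (∀ x z, Comp T S x z ↔ Comp S T x z) ↔ Amicable T S := by
  constructor
  · exact fun hperm => Stmt12Aux.amicable_of_permute hT hS hperm
  · intro ham x z
    constructor
    · exact fun h => Stmt12Aux.one_dir hL hT hS ham h
    · exact fun h => Stmt12Aux.one_dir hL hS hT (Stmt12Aux.amicable_symm ham) h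
end

section
/- If all chains of a lattice L are finite, then any two 2-uniform congruences of L permute. -/
section Aux

variable {L : Type*} [Lattice L]

lemma tuc_mem_pair {T : L → L → Prop} (hT : IsTwoUniformCongruence T) {a b x : L}
    (hab : T a b) (hne : a ≠ b) (hax : T a x) : x = a ∨ x = b := by
  obtain ⟨c, d, hcd, h⟩ := hT.2 a
  have ha := (h a).1 (hT.1.1.refl a)
  have hb := (h b).1 hab
  have hx := (h x).1 hax
  rcases ha with ha | ha <;> rcases hb with hb | hb <;> rcases hx with hx | hx <;>
    simp_all

lemma tuc_partner {T : L → L → Prop} (hT : IsTwoUniformCongruence T) (x : L) :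
    ∃ y, T x y ∧ y ≠ x := by
  obtain ⟨a, b, hab, h⟩ := hT.2 x
  rcases (h x).1 (hT.1.1.refl x) with hx | hx
  · subst hx
    exact ⟨b, (h b).2 (Or.inr rfl), fun e => hab e.symm⟩
  · subst hx
    exact ⟨a, (h a).2 (Or.inl rfl), fun e => hab e⟩

lemma tuc_cover {T : L → L → Prop} (hT : IsTwoUniformCongruence T) {a b : L}
    (hab : T a b) (hne : a ≠ b) : a ⋖ b ∨ b ⋖ a := by
  have hsup : T a (a ⊔ b) := by
    have := (hT.1.2 a a a b (hT.1.1.refl a) hab).1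
    simpa using this
  rcases tuc_mem_pair hT hab hne hsup with h | h
  · -- a ⊔ b = a, so b ≤ a
    have hba : b ≤ a := by
      have h2 : b ≤ a ⊔ b := le_sup_right
      rw [h] at h2; exact h2
    right
    refine ⟨lt_of_le_of_ne hba hne.symm, ?_⟩
    intro m hbm hma
    have h1 : T m b := by
      have h3 := (hT.1.2 a b m m hab (hT.1.1.refl m)).2
      rwa [inf_eq_right.mpr hma.le, inf_eq_left.mpr hbm.le] at h3
    rcases tuc_mem_pair hT (hT.1.1.symm hab) hne.symm (hT.1.1.symm h1) with h2 | h2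
    · exact hbm.ne' h2
    · exact hma.ne h2
  · -- a ⊔ b = b, so a ≤ b
    have hab' : a ≤ b := by
      have h2 : a ≤ a ⊔ b := le_sup_left
      rw [h] at h2; exact h2
    left
    refine ⟨lt_of_le_of_ne hab' hne, ?_⟩
    intro m ham hmb
    have h1 : T a m := by
      have h3 := (hT.1.2 a b m m hab (hT.1.1.refl m)).2
      rwa [inf_eq_left.mpr ham.le, inf_eq_right.mpr hmb.le] at h3
    rcases tuc_mem_pair hT hab hne h1 with h2 | h2
    · exact ham.ne' h2
    · exact hmb.ne h2

lemma lemA {T S : L → L → Prop} (hT : IsTwoUniformCongruence T) (hS : IsTwoUniformCongruence S)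
    {x y z v : L} (hxy : x ⋖ y) (hyz : y ⋖ z) (hTxy : T x y) (hSyz : S y z)
    (hSxv : S x v) (hxv : x ⋖ v) : T v z := by
  have h1 : S y (v ⊔ z) := by
    have := (hS.1.2 x v y z hSxv hSyz).1
    rwa [sup_eq_right.mpr hxy.le] at this
  have hvz : v ⊔ z = z := by
    rcases tuc_mem_pair hS hSyz hyz.ne h1 with h | h
    · exact absurd (le_sup_right.trans h.le) hyz.lt.not_ge
    · exact h
  have hvlez : v ≤ z := sup_eq_right.mp hvz
  have hvney : v ≠ y := by
    intro h; subst h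
    rcases tuc_mem_pair hS hSyz hyz.ne (hS.1.1.symm hSxv) with h2 | h2
    · exact hxy.ne h2
    · exact absurd h2 (hxy.lt.trans hyz.lt).ne
  have hvley : ¬ v ≤ y := by
    intro h
    rcases eq_or_lt_of_le h with h2 | h2
    · exact hvney h2
    · exact hxy.2 hxv.lt h2
  have hyv : y ⊔ v = z := by
    have h3 : y < y ⊔ v := left_lt_sup.mpr hvley
    have h4 : y ⊔ v ≤ z := sup_le hyz.le hvlez
    rcases eq_or_lt_of_le h4 with h5 | h5
    · exact h5
    · exact absurd h5 (hyz.2 h3)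
  have h6 := (hT.1.2 x y v v hTxy (hT.1.1.refl v)).1
  rwa [sup_eq_right.mpr hxv.le, hyv] at h6

lemma descent {T S : L → L → Prop} (hT : IsTwoUniformCongruence T) (hS : IsTwoUniformCongruence S)
    {w x y z u : L} (hwx : w ⋖ x) (hxy : x ⋖ y) (hyz : y ⋖ z)
    (hSwx : S w x) (hTxy : T x y) (hSyz : S y z)
    (hTwu : T w u) (hne : u ≠ w) : u ⋖ w := by
  rcases tuc_cover hT hTwu (Ne.symm hne) with h | h
  · exfalso
    have hSuy : S u y := lemA hS hT hwx hxy hSwx hTxy hTwu h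
    rcases tuc_mem_pair hS hSyz hyz.ne (hS.1.1.symm hSuy) with h2 | h2
    · subst h2
      rcases tuc_mem_pair hT (hT.1.1.symm hTxy) (Ne.symm hxy.ne) (hT.1.1.symm hTwu) with h3 | h3
      · exact (hwx.lt.trans hxy.lt).ne h3
      · exact hwx.ne h3
    · subst h2
      exact h.2 hwx.lt (hxy.lt.trans hyz.lt)
  · exact h

end Aux
section Key

variable {L : Type*} [Lattice L]

lemma key_asc (hL : NoInfiniteChains L) {T S : L → L → Prop}
    (hT : IsTwoUniformCongruence T) (hS : IsTwoUniformCongruence S)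
    {x y z : L} (hxy : x ⋖ y) (hyz : y ⋖ z) (hTxy : T x y) (hSyz : S y z) :
    ∃ w, S x w ∧ T w z := by
  choose t ht hnet using fun a => tuc_partner hT a
  choose s hs hnes using fun a => tuc_partner hS a
  rcases tuc_cover hS (hs x) (hnes x).symm with hc | hc
  · exact ⟨s x, hs x, lemA hT hS hxy hyz hTxy hSyz (hs x) hc⟩
  · exfalso
    -- infinite descent
    set pf : ℕ → L → L := fun n => if n % 2 = 0 then s else t with hpfdef
    set B : ℕ → L → L → Prop := fun n => if n % 2 = 0 then S else T with hBdef
    have hB : ∀ n, IsTwoUniformCongruence (B n) := by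
      intro n
      simp only [hBdef]
      split <;> assumption
    have hBadd : ∀ n, B (n + 2) = B n := by
      intro n
      simp only [hBdef, Nat.add_mod_right]
    have hpf : ∀ n a, B n a (pf n a) ∧ pf n a ≠ a := by
      intro n a
      simp only [hBdef, hpfdef]
      split
      · exact ⟨hs a, hnes a⟩
      · exact ⟨ht a, hnet a⟩
    -- the descending sequence
    set g : ℕ → L := fun n => Nat.rec x (fun k ih => pf k ih) n with hgdef
    have hg0 : g 0 = x := rfl
    have hgsucc : ∀ n, g (n + 1) = pf n (g n) := fun n => rfl
    set F : ℕ → L := fun n => match n with | 0 => z | 1 => y | (n+2) => g n with hFdef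
    have hF0 : F 0 = z := rfl
    have hF1 : F 1 = y := rfl
    have hF2 : ∀ n, F (n + 2) = g n := fun n => rfl
    have hFsucc : ∀ n, F (n + 3) = pf n (F (n + 2)) := fun n => rfl
    -- invariant
    have E : ∀ n, (F (n+1) ⋖ F n ∧ B n (F (n+1)) (F n)) ∧
        (F (n+2) ⋖ F (n+1) ∧ B (n+1) (F (n+2)) (F (n+1))) ∧
        (F (n+3) ⋖ F (n+2) ∧ B (n+2) (F (n+3)) (F (n+2))) := by
      intro n
      induction n with
      | zero =>
        exact ⟨⟨hyz, hSyz⟩, ⟨hxy, hTxy⟩, ⟨hc, hS.1.1.symm (hs x)⟩⟩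
      | succ n ih =>
        obtain ⟨h0, h1, h2⟩ := ih
        refine ⟨h1, h2, ?_⟩
        -- need: F (n+4) ⋖ F (n+3) and B (n+3) (F (n+4)) (F (n+3))
        have hwu : B (n+1) (F (n+3)) (F (n+4)) ∧ F (n+4) ≠ F (n+3) :=
          hpf (n+1) (F (n+3))
        have hSwx : B n (F (n+3)) (F (n+2)) := by
          rw [← hBadd n]; exact h2.2
        have hcov : F (n+4) ⋖ F (n+3) :=
          descent (hB (n+1)) (hB n) h2.1 h1.1 h0.1 hSwx h1.2 h0.2 hwu.1 hwu.2
        refine ⟨hcov, ?_⟩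
        rw [hBadd (n+1)]
        exact (hB (n+1)).1.1.symm hwu.1
    have hanti : StrictAnti F := strictAnti_nat_of_succ_lt fun n => ((E n).1.1).lt
    have hchain : IsChain (· ≤ ·) (Set.range F) := by
      rintro a ⟨m, rfl⟩ b ⟨k, rfl⟩ hne
      rcases lt_trichotomy m k with h | h | h
      · exact Or.inr (hanti h).le
      · exact absurd (congrArg F h) hne
      · exact Or.inl (hanti h).le
    exact (Set.infinite_range_of_injective hanti.injective) (hL _ hchain)

end Key
section Main

variable {L : Type*} [Lattice L]

lemma tuc_dual {T : L → L → Prop} (hT : IsTwoUniformCongruence T) :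
    IsTwoUniformCongruence (fun a b : Lᵒᵈ => T (OrderDual.ofDual a) (OrderDual.ofDual b)) := by
  obtain ⟨⟨heq, hcomp⟩, huni⟩ := hT
  refine ⟨⟨⟨fun a => heq.refl _, fun h => heq.symm h, fun h1 h2 => heq.trans h1 h2⟩, ?_⟩, ?_⟩
  · intro a b c d h1 h2
    exact ⟨(hcomp _ _ _ _ h1 h2).2, (hcomp _ _ _ _ h1 h2).1⟩
  · intro x
    obtain ⟨a, b, hab, h⟩ := huni (OrderDual.ofDual x)
    exact ⟨OrderDual.toDual a, OrderDual.toDual b, fun e => hab e, fun y => h (OrderDual.ofDual y)⟩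

lemma nic_dual (hL : NoInfiniteChains L) : NoInfiniteChains Lᵒᵈ := by
  intro C hC
  exact hL C fun a ha b hb hne => Or.symm (hC ha hb hne)

lemma comp_half (hL : NoInfiniteChains L) (T S : L → L → Prop)
    (hT : IsTwoUniformCongruence T) (hS : IsTwoUniformCongruence S)
    {x z : L} (h : Comp T S x z) : Comp S T x z := by
  obtain ⟨y, hxy, hyz⟩ := h
  by_cases hx : x = y
  · exact ⟨z, hx ▸ hyz, hT.1.1.refl z⟩
  by_cases hy : y = z
  · exact ⟨x, hS.1.1.refl x, hy ▸ hxy⟩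
  rcases tuc_cover hT hxy hx with h1 | h1 <;> rcases tuc_cover hS hyz hy with h2 | h2
  · exact key_asc hL hT hS h1 h2 hxy hyz
  · refine ⟨x ⊓ z, ?_, ?_⟩
    · have := (hS.1.2 x x y z (hS.1.1.refl x) hyz).2
      rwa [inf_eq_left.mpr h1.le] at this
    · have := (hT.1.2 x y z z hxy (hT.1.1.refl z)).2
      rwa [inf_eq_right.mpr h2.le] at this
  · refine ⟨x ⊔ z, ?_, ?_⟩
    · have := (hS.1.2 x x y z (hS.1.1.refl x) hyz).1
      rwa [sup_eq_left.mpr h1.le] at this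
    · have := (hT.1.2 x y z z hxy (hT.1.1.refl z)).1
      rwa [sup_eq_right.mpr h2.le] at this
  · -- descending: use the dual lattice
    obtain ⟨w, hw1, hw2⟩ := key_asc (L := Lᵒᵈ) (nic_dual hL) (tuc_dual hT) (tuc_dual hS)
      (x := OrderDual.toDual x) (y := OrderDual.toDual y) (z := OrderDual.toDual z)
      ((toDual_covBy_toDual_iff).mpr h1) ((toDual_covBy_toDual_iff).mpr h2) hxy hyz
    exact ⟨OrderDual.ofDual w, hw1, hw2⟩

end Main

theorem stmt13 {L : Type*} [Lattice L] (hL : NoInfiniteChains L)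
    (T S : L → L → Prop)
    (hT : IsTwoUniformCongruence T) (hS : IsTwoUniformCongruence S) :
    ∀ x z, Comp T S x z ↔ Comp S T x z := by
  intro x z
  exact ⟨comp_half hL T S hT hS, comp_half hL S T hS hT⟩
end

section
/- Let R be a 2-uniform tolerance on a lattice L without infinite chains, and let u ∈ L. Then the lower R-neighbour of u, if it exists, is unique, and the upper R-neighbour of u, if it exists, is unique. -/
lemma exists_block_superset' {L : Type*} [Lattice L] (R : L → L → Prop) (X : Set L)
    (hX : ∀ x ∈ X, ∀ y ∈ X, R x y) : ∃ M, X ⊆ M ∧ IsBlock R M := by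
  obtain ⟨M, hXM, hM⟩ := zorn_subset_nonempty {Y : Set L | ∀ x ∈ Y, ∀ y ∈ Y, R x y}
    (fun c hc hchain _ => ⟨⋃₀ c, fun x hx y hy => by
      obtain ⟨s, hs, hxs⟩ := hx
      obtain ⟨t, ht, hyt⟩ := hy
      rcases hchain.total hs ht with h | h
      · exact hc ht _ (h hxs) _ hyt
      · exact hc hs _ hxs _ (h hyt), fun s hs => Set.subset_sUnion_of_mem hs⟩) X hX
  exact ⟨M, hXM, hM.1, fun Y hMY hY => (hM.eq_of_le hY hMY).symm⟩

lemma no_three_s16 {L : Type*} [Lattice L] {R : L → L → Prop} (hR : IsTwoUniform R)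
    {x y z : L} (hxy : x ≠ y) (hxz : x ≠ z) (hyz : y ≠ z)
    (rxy : R x y) (rxz : R x z) (ryz : R y z) : False := by
  obtain ⟨hrefl, hsymm, _⟩ := hR.1
  have hX : ∀ p ∈ ({x, y, z} : Set L), ∀ q ∈ ({x, y, z} : Set L), R p q := by
    intro p hp q hq
    simp only [Set.mem_insert_iff, Set.mem_singleton_iff] at hp hq
    rcases hp with rfl | rfl | rfl <;> rcases hq with rfl | rfl | rfl <;>
      first | exact hrefl _ | assumption | exact hsymm _ _ rxy |
        exact hsymm _ _ rxz | exact hsymm _ _ ryz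
  obtain ⟨M, hXM, hM⟩ := exists_block_superset' R _ hX
  obtain ⟨a, b, hab, hMab⟩ := hR.2 M hM
  have hx : x = a ∨ x = b := by have := hXM (by simp : x ∈ _); rw [hMab] at this; simpa using this
  have hy : y = a ∨ y = b := by have := hXM (by simp : y ∈ _); rw [hMab] at this; simpa using this
  have hz : z = a ∨ z = b := by have := hXM (by simp : z ∈ _); rw [hMab] at this; simpa using this
  rcases hx with rfl | rfl <;> rcases hy with rfl | rfl <;> rcases hz with rfl | rfl <;> simp_all

theorem stmt16 {L : Type*} [Lattice L] (hL : NoInfiniteChains L)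
    (R : L → L → Prop) (hR : IsTwoUniform R) (u : L) :
    (∀ v w : L, IsLowerNbr R v u → IsLowerNbr R w u → v = w) ∧
    (∀ v w : L, IsUpperNbr R v u → IsUpperNbr R w u → v = w) := by
  obtain ⟨hrefl, hsymm, hcomp⟩ := hR.1
  constructor
  · intro v w hv hw
    by_contra hvw
    have rvu : R v u := hv.2.1 v (by simp) u (by simp)
    have rwu : R w u := hw.2.1 w (by simp) u (by simp)
    have r1 : R (v ⊓ w) u := by
      have := (hcomp v u w u rvu rwu).2
      simpa using this
    have r2 : R (v ⊓ w) v := by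
      have := (hcomp v v w u (hrefl v) rwu).2
      rwa [inf_eq_left.mpr hv.1.le] at this
    have h1 : v ⊓ w ≠ v := by
      intro h
      have hvlew : v ≤ w := inf_eq_left.mp h
      rcases eq_or_lt_of_le hvlew with h' | h'
      · exact hvw h'
      · exact hv.1.2 h' hw.1.1
    have h2 : v ⊓ w ≠ u := by
      intro h
      have : u ≤ v := by rw [← h]; exact inf_le_left
      exact hv.1.1.not_ge this
    exact (no_three_s16 hR h1 h2 hv.1.ne r2 r1 rvu).elim
  · intro v w hv hw
    by_contra hvw
    have rvu : R u v := hv.2.1 u (by simp) v (by simp)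
    have rwu : R u w := hw.2.1 u (by simp) w (by simp)
    have r1 : R u (v ⊔ w) := by
      have := (hcomp u v u w rvu rwu).1
      simpa using this
    have r2 : R v (v ⊔ w) := by
      have := (hcomp v v u w (hrefl v) rwu).1
      rwa [sup_eq_left.mpr hv.1.le] at this
    have h1 : v ⊔ w ≠ v := by
      intro h
      have hwlev : w ≤ v := sup_eq_left.mp h
      rcases eq_or_lt_of_le hwlev with h' | h'
      · exact hvw h'.symm
      · exact hv.1.2 hw.1.1 h'
    have h2 : u ≠ v ⊔ w := by
      intro h
      have : v ≤ u := by rw [h]; exact le_sup_left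
      exact hv.1.1.not_ge this
    exact (no_three_s16 hR hv.1.ne h2 (Ne.symm h1) rvu r1 r2).elim
end

section
/- Let T and S be 2-uniform tolerances on a lattice L without infinite chains, and let a, u, b ∈ L with a ≺ u, b ≺ u, a ≠ b, (a,u) ∈ T, and (u,b) ∈ S, where {a,u} is a T-block and {b,u} is an S-block. Then (a,b) ∈ S∘T, witnessed by the element a∧b. -/
theorem stmt17 {L : Type*} [Lattice L] (hL : NoInfiniteChains L)
    (T S : L → L → Prop) (hT : IsTwoUniform T) (hS : IsTwoUniform S)
    (a u b : L) (hau : a ⋖ u) (hbu : b ⋖ u) (hab : a ≠ b)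
    (hTau : T a u) (hSub : S u b)
    (hTblock : IsBlock T {a, u}) (hSblock : IsBlock S {b, u}) :
    S a (a ⊓ b) ∧ T (a ⊓ b) b ∧ Comp S T a b := by
  obtain ⟨⟨Trefl, Tsymm, Tcomp⟩, -⟩ := hT
  obtain ⟨⟨Srefl, Ssymm, Scomp⟩, -⟩ := hS
  have h1 : S a (a ⊓ b) := by
    have := (Scomp a a u b (Srefl a) hSub).2
    simpa [inf_eq_left.mpr hau.le] using this
  have h2 : T (a ⊓ b) b := by
    have := (Tcomp a u b b hTau (Trefl b)).2
    simpa [inf_eq_right.mpr hbu.le] using this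
  exact ⟨h1, h2, a ⊓ b, h1, h2⟩
end
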